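/- arXiv:math/0501325 — 8 statements merged into one kernel-verified Lean document; each statement's English description precedes it below -/
import Mathlib

section
/- Let f : L → K be a surjective lattice homomorphism which is lower bounded. If L has the minimal join-cover refinement property (MCRP), then K also has the MCRP. -/
/-- `X` refines `Y`: every element of `X` lies below some element of `Y`. -/
def Refines {α : Type*} [Preorder α] (X Y : Set α) : Prop :=
  ∀ x ∈ X, ∃ y ∈ Y, x ≤ y

/-- `X` is a nontrivial join-cover of `a`: `X` is a finite nonempty set with
`a ≤ sup X` but `a ≰ x` for every `x ∈ X`. -/
def IsNontrivialJoinCover {α : Type*} [SemilatticeSup α] (a : α) (X : Finset α) : Prop :=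
  ∃ h : X.Nonempty, a ≤ X.sup' h id ∧ ∀ x ∈ X, ¬ a ≤ x

/-- `E` is a minimal nontrivial join-cover of `a`. -/
def IsMinimalNontrivialJoinCover {α : Type*} [SemilatticeSup α] (a : α) (E : Finset α) : Prop :=
  IsNontrivialJoinCover a E ∧
    ∀ X : Finset α, IsNontrivialJoinCover a X → Refines (X : Set α) (E : Set α) → E ⊆ X

/-- The minimal join-cover refinement property: every nontrivial join-cover of any element `a`
is refined by some minimal nontrivial join-cover of `a`, and `a` has only finitely many
minimal nontrivial join-covers. -/
def HasMCRP (α : Type*) [SemilatticeSup α] : Prop :=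
  (∀ (a : α) (X : Finset α), IsNontrivialJoinCover a X →
      ∃ E, IsMinimalNontrivialJoinCover a E ∧ Refines (E : Set α) (X : Set α)) ∧
  ∀ a : α, {E : Finset α | IsMinimalNontrivialJoinCover a E}.Finite

/-- If `f : L → K` is a surjective, lower bounded lattice homomorphism and `L` has the MCRP,
then `K` has the MCRP. -/
theorem mcrp_of_surjective_lowerBounded {L K : Type*} [Lattice L] [Lattice K] (f : L → K)
    (hsurj : Function.Surjective f)
    (hsup : ∀ a b : L, f (a ⊔ b) = f a ⊔ f b)
    (hinf : ∀ a b : L, f (a ⊓ b) = f a ⊓ f b)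
    (hlb : ∀ b : K, (∃ x : L, b ≤ f x) → ∃ x₀ : L, b ≤ f x₀ ∧ ∀ x : L, b ≤ f x → x₀ ≤ x)
    (hL : HasMCRP L) : HasMCRP K := by
  classical
  choose β hβ1 hβ2 using fun b : K =>
    hlb b ⟨(hsurj b).choose, ((hsurj b).choose_spec).ge⟩
  have fmono : Monotone f := fun a b hab => by
    have h := hsup a b
    rw [sup_eq_right.2 hab] at h
    exact le_of_le_of_eq le_sup_left h.symm
  have fβ : ∀ b, f (β b) = b := fun b => by
    obtain ⟨x, hx⟩ := hsurj b
    exact le_antisymm ((fmono (hβ2 b x hx.ge)).trans hx.le) (hβ1 b)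
  -- image under f of a sup'
  have fsup : ∀ (E : Finset L) (hE : E.Nonempty),
      f (E.sup' hE id) = (E.image f).sup' (hE.image f) id := by
    intro E hE
    rw [Finset.comp_sup'_eq_sup'_comp hE f hsup, Finset.sup'_image]
    rfl
  -- sup' of β-image
  have βsup : ∀ (X : Finset K) (hX : X.Nonempty),
      f ((X.image β).sup' (hX.image β) id) = X.sup' hX id := by
    intro X hX
    rw [Finset.sup'_image, Finset.comp_sup'_eq_sup'_comp _ f hsup]
    exact Finset.sup'_congr _ rfl (fun x _ => fβ x)
  -- transfer of covers from K to L
  have cover1 : ∀ (b : K) (X : Finset K), IsNontrivialJoinCover b X →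
      IsNontrivialJoinCover (β b) (X.image β) := by
    rintro b X ⟨hX, hle, hnt⟩
    refine ⟨hX.image β, hβ2 b _ ?_, ?_⟩
    · rw [βsup X hX]; exact hle
    · intro y hy hby
      obtain ⟨x, hx, rfl⟩ := Finset.mem_image.1 hy
      exact hnt x hx (le_of_eq_of_le (fβ b).symm ((fmono hby).trans_eq (fβ x)))
  -- transfer of covers from L to K
  have cover2 : ∀ (b : K) (E : Finset L), IsNontrivialJoinCover (β b) E →
      IsNontrivialJoinCover b (E.image f) := by
    rintro b E ⟨hE, hle, hnt⟩
    refine ⟨hE.image f, ?_, ?_⟩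
    · rw [← fsup E hE]
      exact le_of_eq_of_le (fβ b).symm (fmono hle)
    · intro y hy hby
      obtain ⟨e, he, rfl⟩ := Finset.mem_image.1 hy
      exact hnt e he (hβ2 b e hby)
  -- minimality transfer
  have minT : ∀ (b : K) (E : Finset L), IsMinimalNontrivialJoinCover (β b) E →
      IsMinimalNontrivialJoinCover b (E.image f) := by
    rintro b E ⟨hEcov, hEmin⟩
    refine ⟨cover2 b E hEcov, ?_⟩
    intro Y hYcov hYref
    have hβY : IsNontrivialJoinCover (β b) (Y.image β) := cover1 b Y hYcov
    have href : Refines ((Y.image β : Finset L) : Set L) (E : Set L) := by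
      rintro z hz
      obtain ⟨y, hy, rfl⟩ := Finset.mem_image.1 (Finset.mem_coe.1 hz)
      obtain ⟨w, hw, hyw⟩ := hYref y (Finset.mem_coe.2 hy)
      obtain ⟨e, he, rfl⟩ := Finset.mem_image.1 (Finset.mem_coe.1 hw)
      exact ⟨e, he, hβ2 y e hyw⟩
    have hsub := hEmin (Y.image β) hβY href
    intro z hz
    obtain ⟨e, he, rfl⟩ := Finset.mem_image.1 hz
    obtain ⟨y, hy, rfl⟩ := Finset.mem_image.1 (hsub he)
    rw [fβ y]
    exact hy
  -- part 1: refinement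
  have part1 : ∀ (b : K) (X : Finset K), IsNontrivialJoinCover b X →
      ∃ E : Finset L, IsMinimalNontrivialJoinCover (β b) E ∧
        Refines ((E.image f : Finset K) : Set K) (X : Set K) := by
    intro b X hX
    obtain ⟨E, hEmin, hEref⟩ := hL.1 (β b) (X.image β) (cover1 b X hX)
    refine ⟨E, hEmin, ?_⟩
    rintro z hz
    obtain ⟨e, he, rfl⟩ := Finset.mem_image.1 (Finset.mem_coe.1 hz)
    obtain ⟨w, hw, hew⟩ := hEref e (Finset.mem_coe.2 he)
    obtain ⟨x, hx, rfl⟩ := Finset.mem_image.1 (Finset.mem_coe.1 hw)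
    exact ⟨x, hx, (fmono hew).trans_eq (fβ x)⟩
  constructor
  · intro b X hX
    obtain ⟨E, hEmin, hEref⟩ := part1 b X hX
    exact ⟨E.image f, minT b E hEmin, hEref⟩
  · intro b
    refine Set.Finite.subset ((hL.2 (β b)).image (Finset.image f)) ?_
    intro F hF
    obtain ⟨E, hEmin, hEref⟩ := part1 b F hF.1
    have hFE : IsMinimalNontrivialJoinCover b (E.image f) := minT b E hEmin
    have h1 : F ⊆ E.image f := hF.2 (E.image f) hFE.1 hEref
    have h2 : E.image f ⊆ F :=
      hFE.2 F hF.1 (fun x hx => ⟨x, Finset.mem_coe.2 (h1 (Finset.mem_coe.1 hx)), le_rfl⟩)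
    exact ⟨E, hEmin, Finset.Subset.antisymm h2 h1⟩
end

section
/- Let L be a join-semilattice and let Σ be a set of join-irreducible elements of L such that every element of L is the supremum of some subset of Σ and L has the Σ-minimal join-cover refinement property. Then L is lower continuous: for every a ∈ L and every nonempty downward directed subset X ⊆ L whose greatest lower bound ⨅X exists, the greatest lower bound of {a ⊔ x : x ∈ X} exists and equals a ⊔ ⨅X. -/
/-- `M_Σ(a)`: the minimal nontrivial join-covers of `a` contained in `Sg`. -/
def MinCoversIn {α : Type*} [SemilatticeSup α] (Sg : Set α) (a : α) : Set (Finset α) :=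
  {E | IsMinimalNontrivialJoinCover a E ∧ (E : Set α) ⊆ Sg}

/-- The `Sg`-minimal join-cover refinement property. -/
def HasSigmaMCRP {α : Type*} [SemilatticeSup α] (Sg : Set α) : Prop :=
  (∀ p ∈ Sg, ∀ X : Finset α, IsNontrivialJoinCover p X →
    ∃ E ∈ MinCoversIn Sg p, Refines (E : Set α) (X : Set α)) ∧
  ∀ p ∈ Sg, (MinCoversIn Sg p).Finite

/-- The join-dependency relation. -/
def JoinDep {α : Type*} [SemilatticeSup α] (a b : α) : Prop :=
  a ≠ b ∧ ∃ c : α, a ≤ b ⊔ c ∧ ∀ x < b, ¬ a ≤ x ⊔ c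

/-- A lattice (or join-semilattice) is lower continuous: for every `a` and every nonempty
downward directed `X` with greatest lower bound `m`, `a ⊔ m` is the greatest lower bound of
`{a ⊔ x : x ∈ X}`. -/
def LowerContinuous (α : Type*) [SemilatticeSup α] : Prop :=
  ∀ (a : α) (X : Set α) (m : α), X.Nonempty → DirectedOn (· ≥ ·) X → IsGLB X m →
    IsGLB ((fun x => a ⊔ x) '' X) (a ⊔ m)

/-- If `Sg` is a join-generating set of join-irreducible elements of a join-semilattice `L`
such that `L` has the `Sg`-MCRP, then `L` is lower continuous. -/
theorem lowerContinuous_of_sigmaMCRP {L : Type*} [SemilatticeSup L] (Sg : Set L)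
    (hJ : ∀ p ∈ Sg, SupIrred p)
    (hgen : ∀ x : L, ∃ S ⊆ Sg, IsLUB S x)
    (hM : HasSigmaMCRP Sg) : LowerContinuous L := by
  classical
  intro a X m hne hdir hglb
  constructor
  · rintro _ ⟨x, hx, rfl⟩
    exact sup_le_sup_left (hglb.1 hx) a
  · intro b hb
    obtain ⟨S, hSg, hS⟩ := hgen b
    refine hS.2 ?_
    intro p hp
    have hpSg : p ∈ Sg := hSg hp
    have hpb : p ≤ b := hS.1 hp
    have hpax : ∀ x ∈ X, p ≤ a ⊔ x := fun x hx => hpb.trans (hb ⟨x, hx, rfl⟩)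
    by_cases hpa : p ≤ a
    · exact hpa.trans le_sup_left
    by_cases hpX : ∀ x ∈ X, p ≤ x
    · exact le_sup_of_le_right (hglb.2 hpX)
    push_neg at hpX
    obtain ⟨x₀, hx₀X, hpx₀⟩ := hpX
    -- the finite set of minimal covers of p in Sg
    set M : Finset (Finset L) := (hM.2 p hpSg).toFinset with hMdef
    -- for each y, the minimal covers refining {a, y}
    set C : L → Finset (Finset L) :=
      fun y => M.filter (fun E => Refines (E : Set L) ({a, y} : Set L)) with hCdef
    have hCmono : ∀ {z y : L}, z ≤ y → C z ⊆ C y := by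
      intro z y hzy E hE
      rw [hCdef, Finset.mem_filter] at hE ⊢
      refine ⟨hE.1, ?_⟩
      intro e he
      obtain ⟨u, hu, heu⟩ := hE.2 e he
      rcases hu with rfl | hu
      · exact ⟨u, Or.inl rfl, heu⟩
      · rw [Set.mem_singleton_iff] at hu; subst hu
        exact ⟨y, Or.inr rfl, heu.trans hzy⟩
    have hCne : ∀ y ∈ X, y ≤ x₀ → (C y).Nonempty := by
      intro y hyX hyx₀
      have hpy : ¬ p ≤ y := fun h => hpx₀ (h.trans hyx₀)
      have hcov : IsNontrivialJoinCover p ({a, y} : Finset L) := by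
        refine ⟨⟨a, by simp⟩, ?_, ?_⟩
        · have : ({a, y} : Finset L).sup' ⟨a, by simp⟩ id = a ⊔ y := by
            simp [Finset.sup'_insert]
          rw [this]; exact hpax y hyX
        · intro x hx
          rcases Finset.mem_insert.1 hx with rfl | hx
          · exact hpa
          · rw [Finset.mem_singleton] at hx; subst hx; exact hpy
      obtain ⟨E, hEM, hEref⟩ := hM.1 p hpSg _ hcov
      refine ⟨E, ?_⟩
      rw [hCdef, Finset.mem_filter]
      refine ⟨by rw [hMdef, Set.Finite.mem_toFinset]; exact hEM, ?_⟩
      intro e he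
      obtain ⟨u, hu, heu⟩ := hEref e he
      rw [Finset.coe_insert, Finset.coe_singleton] at hu
      exact ⟨u, hu, heu⟩
    -- pick x ∈ X, x ≤ x₀ minimizing (C x).card
    have hTne : ∃ n, ∃ y ∈ X, y ≤ x₀ ∧ (C y).card = n := ⟨_, x₀, hx₀X, le_rfl, rfl⟩
    obtain ⟨x, hxX, hxx₀, hxcard⟩ :=
      Nat.sInf_mem (s := {n | ∃ y ∈ X, y ≤ x₀ ∧ (C y).card = n}) hTne
    have hmin : ∀ y ∈ X, y ≤ x₀ → (C x).card ≤ (C y).card := by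
      intro y hyX hyx₀
      rw [hxcard]
      exact Nat.sInf_le ⟨y, hyX, hyx₀, rfl⟩
    have hkey : ∀ y ∈ X, C x ⊆ C y := by
      intro y hyX
      obtain ⟨z, hzX, hzx, hzy⟩ := hdir x hxX y hyX
      have hzx₀ : z ≤ x₀ := le_trans hzx hxx₀
      have h1 : C z ⊆ C x := hCmono hzx
      have h2 : (C x).card ≤ (C z).card := hmin z hzX hzx₀
      have h3 : C z = C x := Finset.eq_of_subset_of_card_le h1 h2 |>.symm ▸ rfl
      calc C x = C z := (Finset.eq_of_subset_of_card_le h1 h2).symm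
        _ ⊆ C y := hCmono hzy
    obtain ⟨E, hE⟩ := hCne x hxX hxx₀
    have hEmem : E ∈ MinCoversIn Sg p := by
      have := (Finset.mem_filter.1 hE).1
      rwa [hMdef, Set.Finite.mem_toFinset] at this
    obtain ⟨⟨⟨hEne, hpE, _⟩, _⟩, _⟩ := hEmem
    refine le_trans hpE (Finset.sup'_le _ _ ?_)
    intro e he
    simp only [id]
    by_cases hea : e ≤ a
    · exact hea.trans le_sup_left
    · refine le_sup_of_le_right (hglb.2 ?_)
      intro y hyX
      have hEy := hkey y hyX hE
      obtain ⟨u, hu, heu⟩ := (Finset.mem_filter.1 hEy).2 e he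
      rcases hu with rfl | hu
      · exact absurd heu hea
      · rw [Set.mem_singleton_iff] at hu; subst hu; exact heu
end

section
/- Every algebraic and lower continuous complete lattice is dually algebraic: if L is a complete lattice in which every element is a join of compact elements and which is lower continuous, then every element of L is a meet of dually compact elements. -/
/-- An element `a` of a complete lattice is compact if whenever `a ≤ sup X` for an upward
directed nonempty set `X`, then `a ≤ x` for some `x ∈ X`. -/
def CompactEl {α : Type*} [CompleteLattice α] (a : α) : Prop :=
  ∀ X : Set α, X.Nonempty → DirectedOn (· ≤ ·) X → a ≤ sSup X → ∃ x ∈ X, a ≤ x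

/-- An element is dually compact if it is compact in the order dual. -/
def DuallyCompactEl {α : Type*} [CompleteLattice α] (a : α) : Prop :=
  ∀ X : Set α, X.Nonempty → DirectedOn (· ≥ ·) X → sInf X ≤ a → ∃ x ∈ X, x ≤ a

/-- A complete lattice is algebraic if every element is a join of compact elements. -/
def AlgebraicLattice (α : Type*) [CompleteLattice α] : Prop :=
  ∀ a : α, ∃ S : Set α, (∀ x ∈ S, CompactEl x) ∧ a = sSup S

/-- A complete lattice is dually algebraic if every element is a meet of dually compact
elements. -/
def DuallyAlgebraicLattice (α : Type*) [CompleteLattice α] : Prop :=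
  ∀ a : α, ∃ S : Set α, (∀ x ∈ S, DuallyCompactEl x) ∧ a = sInf S

/-- Key lemma: if `k` is compact and `k ≰ a`, there is a dually compact `m ≥ a` with `k ≰ m`. -/
theorem exists_duallyCompact_sep {L : Type*} [CompleteLattice L]
    (hlc : LowerContinuous L) {a k : L} (hk : CompactEl k) (hka : ¬ k ≤ a) :
    ∃ m : L, a ≤ m ∧ ¬ k ≤ m ∧ DuallyCompactEl m := by
  set s : Set L := {x | a ≤ x ∧ ¬ k ≤ x} with hs
  obtain ⟨m, ham, hms, hmax⟩ := zorn_le_nonempty₀ s (fun c hcs hc y hyc => by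
    refine ⟨sSup c, ⟨le_trans (hcs hyc).1 (le_sSup hyc), fun hkc => ?_⟩, fun z hz => le_sSup hz⟩
    obtain ⟨x, hxc, hkx⟩ := hk c ⟨y, hyc⟩ hc.directedOn hkc
    exact (hcs hxc).2 hkx) a ⟨le_rfl, hka⟩
  refine ⟨m, ham, hms.2, fun X hXne hXdir hXinf => ?_⟩
  by_contra hno
  push_neg at hno
  -- every `m ⊔ x` for `x ∈ X` strictly exceeds `m`, so `k ≤ m ⊔ x` by maximality
  have hkx : ∀ x ∈ X, k ≤ m ⊔ x := by
    intro x hx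
    by_contra hkm
    have : m ⊔ x ∈ s := ⟨le_trans hms.1 le_sup_left, hkm⟩
    have := hmax this le_sup_left
    exact hno x hx (le_sup_right.trans this)
  have hglb := hlc m X (sInf X) hXne hXdir (isGLB_sInf X)
  have : k ≤ m ⊔ sInf X := by
    refine hglb.2 ?_
    rintro _ ⟨x, hx, rfl⟩
    exact hkx x hx
  rw [sup_eq_left.2 hXinf] at this
  exact hms.2 this

/-- Every algebraic and lower continuous complete lattice is dually algebraic. -/
theorem duallyAlgebraic_of_algebraic_lowerContinuous {L : Type*} [CompleteLattice L]
    (halg : AlgebraicLattice L) (hlc : LowerContinuous L) :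
    DuallyAlgebraicLattice L := by
  intro a
  refine ⟨{d | DuallyCompactEl d ∧ a ≤ d}, fun x hx => hx.1, le_antisymm (le_sInf fun d hd => hd.2) ?_⟩
  by_contra hlt
  obtain ⟨T, hT, hTsup⟩ := halg (sInf {d | DuallyCompactEl d ∧ a ≤ d})
  have : ∃ k ∈ T, ¬ k ≤ a := by
    by_contra h
    push_neg at h
    exact hlt (hTsup ▸ sSup_le h)
  obtain ⟨k, hkT, hka⟩ := this
  obtain ⟨m, ham, hkm, hm⟩ := exists_duallyCompact_sep hlc (hT k hkT) hka
  exact hkm <| (le_sSup hkT).trans <| hTsup ▸ sInf_le ⟨hm, ham⟩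
end

section
/- Let S be a join-semilattice satisfying the minimal join-cover refinement property (MCRP). Then the ideal lattice Id S is bi-algebraic, i.e., both algebraic and dually algebraic. -/
/-- An ideal of a join-semilattice: a (possibly empty) downward closed subset closed under
finite joins. -/
def IsIdealSet {α : Type*} [SemilatticeSup α] (I : Set α) : Prop :=
  (∀ x ∈ I, ∀ y, y ≤ x → y ∈ I) ∧ ∀ x ∈ I, ∀ y ∈ I, x ⊔ y ∈ I

/-- The ideal lattice `Id S` of a join-semilattice, ordered by inclusion. -/
def IdealLattice (α : Type*) [SemilatticeSup α] : Type _ :=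
  {I : Set α // IsIdealSet I}

namespace IdealLattice

variable {α : Type*} [SemilatticeSup α]

instance : PartialOrder (IdealLattice α) :=
  PartialOrder.lift (fun I => I.1) Subtype.val_injective

instance : InfSet (IdealLattice α) :=
  ⟨fun s => ⟨{x | ∀ I ∈ s, x ∈ I.1},
    fun x hx y hyx I hI => I.2.1 x (hx I hI) y hyx,
    fun x hx y hy I hI => I.2.2 x (hx I hI) y (hy I hI)⟩⟩

/-- `Id S` is a complete lattice, with meets given by intersections. -/
instance : CompleteLattice (IdealLattice α) :=
  completeLatticeOfInf _ fun s =>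
    ⟨fun I hI x hx => hx I hI, fun J hJ x hx I hI => hJ hI hx⟩

end IdealLattice

section BiAlgProof

open Set

variable {S : Type*} [SemilatticeSup S]

private lemma IL.le_def {I J : IdealLattice S} : I ≤ J ↔ I.1 ⊆ J.1 := Iff.rfl

private lemma IL.mem_sInf {s : Set (IdealLattice S)} {x : S} :
    x ∈ (sInf s).1 ↔ ∀ I ∈ s, x ∈ I.1 := Iff.rfl

private lemma IL.sSup_def (s : Set (IdealLattice S)) : sSup s = sInf (upperBounds s) := rfl

private lemma IL.ext {I J : IdealLattice S} (h : I.1 = J.1) : I = J := Subtype.ext h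

/-- The principal ideal. -/
private def pIdeal (a : S) : IdealLattice S :=
  ⟨{x | x ≤ a}, fun _ hx _ hyx => le_trans hyx hx, fun _ hx _ hy => sup_le hx hy⟩

/-- Union of a nonempty directed family of ideals is an ideal. -/
private def dirUnion (X : Set (IdealLattice S)) (hd : DirectedOn (· ≤ ·) X) :
    IdealLattice S :=
  ⟨⋃ K ∈ X, K.1, by
    intro x hx y hyx
    simp only [Set.mem_iUnion] at hx ⊢
    obtain ⟨K, hK, hxK⟩ := hx
    exact ⟨K, hK, K.2.1 x hxK y hyx⟩, by
    intro x hx y hy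
    simp only [Set.mem_iUnion] at hx hy ⊢
    obtain ⟨K1, hK1, hx1⟩ := hx
    obtain ⟨K2, hK2, hy2⟩ := hy
    obtain ⟨K, hK, h1, h2⟩ := hd K1 hK1 K2 hK2
    exact ⟨K, hK, K.2.2 x (h1 hx1) y (h2 hy2)⟩⟩

private lemma pIdeal_compact (a : S) : CompactEl (pIdeal a) := by
  intro X hne hdir hle
  have hub : dirUnion X hdir ∈ upperBounds X := by
    intro K hK
    intro x hx
    simp only [dirUnion, Set.mem_iUnion]
    exact ⟨K, hK, hx⟩
  have ha : a ∈ (sSup X).1 := hle (le_refl a)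
  rw [IL.sSup_def] at ha
  have ha' : a ∈ (dirUnion X hdir).1 := ha _ hub
  simp only [dirUnion, Set.mem_iUnion] at ha'
  obtain ⟨K, hK, haK⟩ := ha'
  exact ⟨K, hK, fun x hx => K.2.1 a haK x hx⟩

private lemma algebraic : AlgebraicLattice (IdealLattice S) := by
  intro I
  refine ⟨pIdeal '' I.1, ?_, ?_⟩
  · rintro _ ⟨x, _, rfl⟩
    exact pIdeal_compact x
  · apply IL.ext
    apply Set.Subset.antisymm
    · intro x hx J hJ
      exact hJ ⟨x, hx, rfl⟩ (le_refl x)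
    · rw [IL.sSup_def]
      intro x hx
      exact hx I (by rintro _ ⟨y, hy, rfl⟩; intro z hz; exact I.2.1 y hy z hz)

/-- The ideal generated by `J ∪ {s}`. -/
private def extIdeal (J : IdealLattice S) (s : S) : IdealLattice S :=
  ⟨{x | x ≤ s ∨ ∃ j ∈ J.1, x ≤ s ⊔ j}, by
    rintro x (hx | ⟨j, hj, hx⟩) y hyx
    · exact Or.inl (hyx.trans hx)
    · exact Or.inr ⟨j, hj, hyx.trans hx⟩, by
    rintro x (hx | ⟨j1, hj1, hx⟩) y (hy | ⟨j2, hj2, hy⟩)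
    · exact Or.inl (sup_le hx hy)
    · exact Or.inr ⟨j2, hj2, sup_le (hx.trans le_sup_left) hy⟩
    · exact Or.inr ⟨j1, hj1, sup_le hx (hy.trans le_sup_left)⟩
    · exact Or.inr ⟨j1 ⊔ j2, J.2.2 j1 hj1 j2 hj2,
        sup_le (hx.trans (sup_le le_sup_left ((le_sup_left).trans le_sup_right)))
          (hy.trans (sup_le le_sup_left ((le_sup_right).trans le_sup_right)))⟩⟩

private lemma le_extIdeal (J : IdealLattice S) (s : S) : J ≤ extIdeal J s :=
  fun x hx => Or.inr ⟨x, hx, le_sup_right⟩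

private lemma mem_extIdeal_self (J : IdealLattice S) (s : S) : s ∈ (extIdeal J s).1 :=
  Or.inl (le_refl s)

/-- In a directed (downward) nonempty family, a finite subfamily has a lower bound. -/
private lemma exists_lb {X : Set (IdealLattice S)} (hne : X.Nonempty)
    (hdir : DirectedOn (· ≥ ·) X) (F : Finset (IdealLattice S)) (hF : ↑F ⊆ X) :
    ∃ K ∈ X, ∀ J ∈ F, K ≤ J := by
  classical
  induction F using Finset.induction with
  | empty => obtain ⟨K, hK⟩ := hne; exact ⟨K, hK, by simp⟩
  | @insert J F hJF ih =>
    obtain ⟨K, hK, hKF⟩ := ih (by intro x hx; exact hF (by simp [hx]))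
    have hJ : J ∈ X := hF (by simp)
    obtain ⟨K', hK', h1, h2⟩ := hdir K hK J hJ
    refine ⟨K', hK', ?_⟩
    intro J' hJ'
    rcases Finset.mem_insert.1 hJ' with rfl | hJ'
    · exact h2
    · exact h1.trans (hKF J' hJ')

/-- Key lemma: an ideal maximal with respect to not containing `a` is dually compact. -/
private lemma maximal_duallyCompact (h : HasMCRP S) (J : IdealLattice S) (a : S)
    (ha : a ∉ J.1)
    (hmax : ∀ K : IdealLattice S, J ≤ K → a ∉ K.1 → K ≤ J) :
    DuallyCompactEl J := by
  classical
  intro X hne hdir hle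
  by_contra hcon
  push_neg at hcon
  -- Step 1: find K0 ∈ X with a ∉ K0
  have haInf : a ∉ (sInf X).1 := fun hmem => ha (hle hmem)
  rw [IL.mem_sInf] at haInf
  push_neg at haInf
  obtain ⟨K0, hK0X, haK0⟩ := haInf
  -- Step 2: restrict to X'
  set X' : Set (IdealLattice S) := {K ∈ X | K ≤ K0} with hX'
  have hne' : X'.Nonempty := ⟨K0, hK0X, le_refl _⟩
  have hdir' : DirectedOn (· ≥ ·) X' := by
    rintro K1 ⟨hK1, hK1le⟩ K2 ⟨hK2, _⟩
    obtain ⟨K, hK, h1, h2⟩ := hdir K1 hK1 K2 hK2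
    exact ⟨K, ⟨hK, h1.trans hK1le⟩, h1, h2⟩
  have hle' : ∀ x, (∀ K ∈ X', x ∈ K.1) → x ∈ J.1 := by
    intro x hx
    apply hle
    rw [IL.mem_sInf]
    intro K hK
    obtain ⟨K', hK', h1, h2⟩ := hdir K hK K0 hK0X
    exact h1 (hx K' ⟨hK', h2⟩)
  have haX' : ∀ K ∈ X', a ∉ K.1 := by
    rintro K ⟨_, hKle⟩ hmem
    exact haK0 (hKle hmem)
  -- Step 3: for each K ∈ X', pick s_K ∈ K \ J and j_K ∈ J with a ≤ s_K ⊔ j_K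
  have hpick : ∀ K ∈ X', ∃ sk ∈ K.1, sk ∉ J.1 ∧ ∃ jk ∈ J.1, a ≤ sk ⊔ jk := by
    intro K hKX'
    have hnotle : ¬ K ≤ J := fun hKJ => hcon K hKX'.1 hKJ
    rw [IL.le_def, Set.not_subset] at hnotle
    obtain ⟨sk, hskK, hskJ⟩ := hnotle
    refine ⟨sk, hskK, hskJ, ?_⟩
    have hext : ¬ extIdeal J sk ≤ J := by
      intro hh
      exact hskJ (hh (mem_extIdeal_self J sk))
    have haext : a ∈ (extIdeal J sk).1 := by
      by_contra haext
      exact hext (hmax _ (le_extIdeal J sk) haext)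
    rcases haext with hle1 | ⟨j, hj, hle2⟩
    · exact absurd (K.2.1 sk hskK a hle1) (haX' K hKX')
    · exact ⟨j, hj, hle2⟩
  haveI : Nonempty S := ⟨a⟩
  choose! sk hskK hskJ jk hjkJ hcov using hpick
  -- Step 4: {s_K, j_K} is a nontrivial join-cover of a, get a refining minimal cover
  have hntc : ∀ K ∈ X', IsNontrivialJoinCover a ({sk K, jk K} : Finset S) := by
    intro K hK
    refine ⟨⟨sk K, by simp⟩, ?_, ?_⟩
    · calc a ≤ sk K ⊔ jk K := hcov K hK
        _ ≤ _ := by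
          apply sup_le
          · exact Finset.le_sup' id (by simp : sk K ∈ ({sk K, jk K} : Finset S))
          · exact Finset.le_sup' id (by simp : jk K ∈ ({sk K, jk K} : Finset S))
    · intro x hx
      rcases Finset.mem_insert.1 hx with rfl | hx
      · exact fun hax => haX' K hK (K.2.1 _ (hskK K hK) a hax)
      · rw [Finset.mem_singleton] at hx
        subst hx
        exact fun hax => ha (J.2.1 _ (hjkJ K hK) a hax)
  have hE : ∀ K ∈ X', ∃ E, IsMinimalNontrivialJoinCover a E ∧
      Refines (E : Set S) (({sk K, jk K} : Finset S) : Set S) :=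
    fun K hK => h.1 a _ (hntc K hK)
  choose! E hEmin hEref using hE
  -- Step 5: pigeonhole — some minimal cover occurs cofinally
  have hfin := h.2 a
  have hcof : ∃ E0 : Finset S, IsMinimalNontrivialJoinCover a E0 ∧
      ∀ K ∈ X', ∃ K' ∈ X', K' ≤ K ∧ E K' = E0 := by
    by_contra hnc
    push_neg at hnc
    -- for each minimal cover E0, a witness K_{E0} below which E never equals E0
    have hwit : ∀ E0 ∈ hfin.toFinset, ∃ KE ∈ X', ∀ K' ∈ X', K' ≤ KE → E K' ≠ E0 := by
      intro E0 hE0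
      rw [Set.Finite.mem_toFinset] at hE0
      obtain ⟨K, hK, hprop⟩ := hnc E0 hE0
      exact ⟨K, hK, fun K' hK' hle'' heq => hprop K' hK' hle'' heq⟩
    choose! KE hKEX hKEprop using hwit
    obtain ⟨K, hKX', hKlb⟩ := exists_lb hne' hdir' (hfin.toFinset.image KE)
      (by
        intro x hx
        rw [Finset.coe_image] at hx
        obtain ⟨E0, hE0, rfl⟩ := hx
        exact hKEX E0 hE0)
    have hEK : E K ∈ hfin.toFinset := by
      rw [Set.Finite.mem_toFinset]
      exact hEmin K hKX'
    exact hKEprop (E K) hEK K hKX'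
      (hKlb _ (Finset.mem_image_of_mem KE hEK)) rfl
  obtain ⟨E0, hE0min, hE0cof⟩ := hcof
  -- Step 6: every element of E0 is in J
  have hE0J : ∀ e ∈ E0, e ∈ J.1 := by
    intro e he
    by_contra heJ
    apply heJ
    apply hle'
    intro K hK
    obtain ⟨K', hK', hK'le, hEK'⟩ := hE0cof K hK
    have href := hEref K' hK'
    rw [hEK'] at href
    obtain ⟨y, hy, hey⟩ := href e (by exact_mod_cast he)
    rw [Finset.mem_coe, Finset.mem_insert, Finset.mem_singleton] at hy
    rcases hy with rfl | rfl
    · exact hK'le (K'.2.1 _ (hskK K' hK') e hey)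
    · exact absurd (J.2.1 _ (hjkJ K' hK') e hey) heJ
  -- Step 7: contradiction, a ∈ J
  obtain ⟨hE0ne, hE0le, _⟩ := hE0min.1
  have : E0.sup' hE0ne id ∈ J.1 :=
    Finset.sup'_mem J.1 (fun x hx y hy => J.2.2 x hx y hy) E0 hE0ne id hE0J
  exact ha (J.2.1 _ this a hE0le)

/-- Zorn: an ideal `I` not containing `a` extends to one maximal without `a`. -/
private lemma exists_maximal (I : IdealLattice S) (a : S) (ha : a ∉ I.1) :
    ∃ J : IdealLattice S, I ≤ J ∧ a ∉ J.1 ∧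
      ∀ K : IdealLattice S, J ≤ K → a ∉ K.1 → K ≤ J := by
  set 𝒮 : Set (Set S) := {T | IsIdealSet T ∧ I.1 ⊆ T ∧ a ∉ T} with h𝒮
  have hzorn : ∀ c ⊆ 𝒮, IsChain (· ⊆ ·) c → c.Nonempty →
      ∃ ub ∈ 𝒮, ∀ s ∈ c, s ⊆ ub := by
    intro c hc hchain hcne
    refine ⟨⋃₀ c, ⟨⟨?_, ?_⟩, ?_, ?_⟩, fun s hs => Set.subset_sUnion_of_mem hs⟩
    · rintro x ⟨T, hT, hxT⟩ y hyx
      exact ⟨T, hT, (hc hT).1.1 x hxT y hyx⟩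
    · rintro x ⟨T1, hT1, hx1⟩ y ⟨T2, hT2, hy2⟩
      rcases hchain.total hT1 hT2 with hh | hh
      · exact ⟨T2, hT2, (hc hT2).1.2 x (hh hx1) y hy2⟩
      · exact ⟨T1, hT1, (hc hT1).1.2 x hx1 y (hh hy2)⟩
    · obtain ⟨T, hT⟩ := hcne
      exact ((hc hT).2.1).trans (Set.subset_sUnion_of_mem hT)
    · rintro ⟨T, hT, haT⟩
      exact (hc hT).2.2 haT
  obtain ⟨m, hIm, hmem, hmax⟩ := zorn_subset_nonempty 𝒮 hzorn I.1 ⟨I.2, le_refl _, ha⟩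
  refine ⟨⟨m, hmem.1⟩, hIm, hmem.2.2, ?_⟩
  intro K hJK haK
  have : K.1 ∈ 𝒮 := ⟨K.2, hIm.trans hJK, haK⟩
  exact hmax this hJK

private lemma duallyAlgebraic (h : HasMCRP S) : DuallyAlgebraicLattice (IdealLattice S) := by
  intro I
  refine ⟨{J | DuallyCompactEl J ∧ I ≤ J}, fun J hJ => hJ.1, ?_⟩
  apply IL.ext
  apply Set.Subset.antisymm
  · intro x hx
    rw [IL.mem_sInf]
    rintro J ⟨_, hIJ⟩
    exact hIJ hx
  · intro x hx
    rw [IL.mem_sInf] at hx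
    by_contra hxI
    obtain ⟨J, hIJ, hxJ, hmax⟩ := exists_maximal I x hxI
    exact hxJ (hx J ⟨maximal_duallyCompact h J x hxJ hmax, hIJ⟩)

end BiAlgProof

/-- If a join-semilattice `S` has the MCRP, then its ideal lattice `Id S` is bi-algebraic:
both algebraic and dually algebraic. -/
theorem idealLattice_biAlgebraic_of_mcrp {S : Type*} [SemilatticeSup S] (h : HasMCRP S) :
    AlgebraicLattice (IdealLattice S) ∧ DuallyAlgebraicLattice (IdealLattice S) :=
  ⟨algebraic, duallyAlgebraic h⟩
end

section
/- Let B be an infinite Boolean algebra. Then the ideal lattice Id B is not lower continuous: there exist an ideal A of B and a decreasing sequence (Bₙ)ₙ<ω of ideals of B such that A ⊔ ⨅ₙ Bₙ ≠ ⨅ₙ (A ⊔ Bₙ) in the complete lattice Id B. -/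
-- auxiliary stuff
section Aux

variable {B : Type*} [BooleanAlgebra B]

private def LargeElt (u : B) : Prop := (Set.Iic u).Infinite

private lemma largeElt_top [Infinite B] : LargeElt (⊤ : B) := by
  have h : (Set.Iic (⊤ : B)) = Set.univ := by ext x; simp
  rw [LargeElt, h]; exact Set.infinite_univ

private lemma exists_split (u : B) (hu : LargeElt u) :
    ∃ v : B, v ≠ ⊥ ∧ v ≤ u ∧ LargeElt (u \ v) := by
  obtain ⟨x, hxu, hx⟩ : ∃ x ∈ Set.Iic u, x ∉ ({⊥, u} : Set B) := by
    obtain ⟨x, hx1, hx2⟩ := (hu.diff (Set.toFinite ({⊥, u} : Set B))).nonempty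
    exact ⟨x, hx1, hx2⟩
  simp only [Set.mem_insert_iff, Set.mem_singleton_iff, not_or] at hx
  have hsplit : LargeElt x ∨ LargeElt (u \ x) := by
    by_contra h
    push_neg at h
    obtain ⟨h1, h2⟩ := h
    rw [LargeElt, Set.not_infinite] at h1 h2
    refine hu ?_
    apply Set.Finite.subset (Set.Finite.image (fun p : B × B => p.1 ⊔ p.2) (h1.prod h2))
    intro y hy
    refine ⟨(y ⊓ x, y \ x), ⟨inf_le_right, sdiff_le_sdiff_right hy⟩, ?_⟩
    exact sup_inf_sdiff y x
  rcases hsplit with h | h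
  · refine ⟨u \ x, ?_, sdiff_le, ?_⟩
    · intro hbot
      rw [sdiff_eq_bot_iff] at hbot
      exact hx.2 (le_antisymm hxu hbot)
    · rwa [sdiff_sdiff_right_self, inf_eq_right.2 hxu]
  · exact ⟨x, hx.1, hxu, h⟩

variable (B) in
private noncomputable def bigSeq [Infinite B] : ℕ → {u : B // LargeElt u}
  | 0 => ⟨⊤, largeElt_top⟩
  | n + 1 =>
    let p := bigSeq n
    ⟨p.1 \ Classical.choose (exists_split p.1 p.2),
      (Classical.choose_spec (exists_split p.1 p.2)).2.2⟩

variable (B) in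
private noncomputable def disjSeq [Infinite B] (n : ℕ) : B :=
  Classical.choose (exists_split (bigSeq B n).1 (bigSeq B n).2)

variable [Infinite B]

private lemma disjSeq_ne_bot (n : ℕ) : disjSeq B n ≠ ⊥ :=
  (Classical.choose_spec (exists_split (bigSeq B n).1 (bigSeq B n).2)).1

private lemma disjSeq_le (n : ℕ) : disjSeq B n ≤ (bigSeq B n).1 :=
  (Classical.choose_spec (exists_split (bigSeq B n).1 (bigSeq B n).2)).2.1

private lemma bigSeq_succ (n : ℕ) : (bigSeq B (n + 1)).1 = (bigSeq B n).1 \ disjSeq B n := rfl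

private lemma bigSeq_antitone : Antitone (fun n => (bigSeq B n).1) := by
  apply antitone_nat_of_succ_le
  intro n
  rw [bigSeq_succ]
  exact sdiff_le

private lemma disjSeq_disjoint {m n : ℕ} (h : m < n) : Disjoint (disjSeq B n) (disjSeq B m) := by
  have h1 : disjSeq B n ≤ (bigSeq B m).1 \ disjSeq B m := by
    calc disjSeq B n ≤ (bigSeq B n).1 := disjSeq_le n
    _ ≤ (bigSeq B (m + 1)).1 := bigSeq_antitone h
    _ = (bigSeq B m).1 \ disjSeq B m := bigSeq_succ m
  exact disjoint_sdiff_self_left.mono_left h1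

variable (B) in
private noncomputable def sSeq (n : ℕ) : B := (Finset.range (n + 1)).sup (disjSeq B)

private lemma sSeq_mono : Monotone (sSeq B) := fun m n h =>
  Finset.sup_mono (Finset.range_subset_range.2 (by omega))

private lemma disjSeq_le_sSeq {i n : ℕ} (h : i ≤ n) : disjSeq B i ≤ sSeq B n :=
  Finset.le_sup (Finset.mem_range.2 (by omega))

private lemma disjoint_sSeq (n : ℕ) : Disjoint (disjSeq B (n + 1)) (sSeq B n) := by
  rw [sSeq, Finset.disjoint_sup_right]
  intro i hi
  exact disjSeq_disjoint (by simpa using hi)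

end Aux

private lemma idl_mem_iInf {α : Type*} [SemilatticeSup α] {f : ℕ → IdealLattice α} {x : α} :
    x ∈ (⨅ n, f n).1 ↔ ∀ n, x ∈ (f n).1 := by
  constructor
  · intro h n; exact h (f n) ⟨n, rfl⟩
  · rintro h I ⟨n, rfl⟩; exact h n

/-- For an infinite Boolean algebra `B`, the ideal lattice `Id B` fails lower continuity:
there are an ideal `A` and a decreasing sequence `(Bₙ)` of ideals with
`A ⊔ ⨅ₙ Bₙ ≠ ⨅ₙ (A ⊔ Bₙ)`. -/
theorem idealLattice_not_lowerContinuous_of_infinite_boolean {B : Type*} [BooleanAlgebra B]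
    [Infinite B] :
    ∃ (A : IdealLattice B) (Bn : ℕ → IdealLattice B), Antitone Bn ∧
      A ⊔ (⨅ n, Bn n) ≠ ⨅ n, (A ⊔ Bn n) := by
  classical
  set s : ℕ → B := sSeq B with hs
  have hAideal : IsIdealSet {x : B | ∃ n, x ≤ s n} := by
    constructor
    · rintro x ⟨n, hxn⟩ y hyx; exact ⟨n, le_trans hyx hxn⟩
    · rintro x ⟨m, hxm⟩ y ⟨n, hyn⟩
      exact ⟨max m n, sup_le (hxm.trans (sSeq_mono (le_max_left m n)))
        (hyn.trans (sSeq_mono (le_max_right m n)))⟩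
  have hBideal : ∀ n : ℕ, IsIdealSet (Set.Iic ((s n)ᶜ)) :=
    fun n => ⟨fun x hx y hyx => le_trans hyx hx, fun x hx y hy => sup_le hx hy⟩
  set A : IdealLattice B := ⟨{x | ∃ n, x ≤ s n}, hAideal⟩ with hA
  set Bn : ℕ → IdealLattice B := fun n => ⟨Set.Iic ((s n)ᶜ), hBideal n⟩ with hBn
  refine ⟨A, Bn, ?_, ?_⟩
  · -- antitone
    intro m n h x hx
    exact le_trans hx (compl_le_compl (sSeq_mono h))
  · -- the inequality
    intro heq
    -- ⊤ is in the RHS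
    have htop : (⊤ : B) ∈ (⨅ n, A ⊔ Bn n).1 := by
      rw [idl_mem_iInf]
      intro n
      have h1 : A ≤ A ⊔ Bn n := le_sup_left
      have h2 : Bn n ≤ A ⊔ Bn n := le_sup_right
      have hsn : s n ∈ (A ⊔ Bn n).1 := h1 ⟨n, le_rfl⟩
      have hcn : (s n)ᶜ ∈ (A ⊔ Bn n).1 := h2 le_rfl
      have := (A ⊔ Bn n).2.2 _ hsn _ hcn
      rwa [sup_compl_eq_top] at this
    -- the separating ideal D
    have hD : IsIdealSet {z : B | ∃ n, ∃ c : B, (∀ m, c ≤ (s m)ᶜ) ∧ z ≤ s n ⊔ c} := by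
      constructor
      · rintro x ⟨n, c, hc, hx⟩ y hyx; exact ⟨n, c, hc, hyx.trans hx⟩
      · rintro x ⟨m, c, hc, hx⟩ y ⟨n, d, hd, hy⟩
        refine ⟨max m n, c ⊔ d, fun k => sup_le (hc k) (hd k), ?_⟩
        have hx' : x ≤ s (max m n) ⊔ (c ⊔ d) :=
          hx.trans (sup_le ((sSeq_mono (le_max_left m n)).trans le_sup_left)
            (le_sup_left.trans le_sup_right))
        have hy' : y ≤ s (max m n) ⊔ (c ⊔ d) :=
          hy.trans (sup_le ((sSeq_mono (le_max_right m n)).trans le_sup_left)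
            (le_sup_right.trans le_sup_right))
        exact sup_le hx' hy'
    set D : IdealLattice B := ⟨_, hD⟩ with hDdef
    have hAD : A ≤ D := by
      rintro x ⟨n, hxn⟩
      exact ⟨n, ⊥, fun m => bot_le, le_trans hxn le_sup_left⟩
    have hID : (⨅ n, Bn n) ≤ D := by
      intro c hc
      rw [idl_mem_iInf] at hc
      exact ⟨0, c, hc, le_sup_right⟩
    have hle : A ⊔ (⨅ n, Bn n) ≤ D := sup_le hAD hID
    have htopD : (⊤ : B) ∈ D.1 := hle (heq ▸ htop)
    obtain ⟨n, c, hc, htle⟩ := htopD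
    -- derive the contradiction
    have h1 : disjSeq B (n + 1) ≤ s n ⊔ c := le_trans le_top htle
    have h2 : Disjoint (disjSeq B (n + 1)) (s n) := disjoint_sSeq n
    have h3 : Disjoint (disjSeq B (n + 1)) c := by
      have : Disjoint ((s (n+1))ᶜ)ᶜ c := disjoint_compl_left.mono_right (hc (n + 1))
      rw [compl_compl] at this
      exact this.mono_left (disjSeq_le_sSeq (le_refl (n + 1)))
    have := (disjoint_sup_right.2 ⟨h2, h3⟩).eq_bot_of_le h1
    exact disjSeq_ne_bot (n + 1) this
end

section
/- Let L be a lattice. Then: (a) L is dually *-distributive if and only if L is lower continuous and dually staircase distributive; (b) if L is dually *-distributive then L is lower continuous and dually zipper distributive, and if L is lower continuous and dually zipper distributive then L is lower continuous and join-semidistributive; (c) if every subset of L has a greatest lower bound, then the following four conditions are equivalent: L is dually *-distributive; L is lower continuous and dually staircase distributive; L is lower continuous and dually zipper distributive; L is lower continuous and join-semidistributive. -/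
/-- `dstar a s` is the element `a*s` defined (for nonempty `s`, with the sequence written in
reverse, head = last entry) by `a*⟨b⟩ = a ⊔ b` and `a*(s⌢⟨b⟩) = a ⊔ (b ⊓ a*s)`. -/
def dstar {α : Type*} [Lattice α] (a : α) : List α → α
  | [] => a
  | [b] => a ⊔ b
  | b :: s => a ⊔ (b ⊓ dstar a s)

/-- `a*B`: the set of all `a*s` for `s` a nonempty finite sequence of elements of `B`. -/
def dstarSet {α : Type*} [Lattice α] (a : α) (B : Set α) : Set α :=
  {x | ∃ s : List α, s ≠ [] ∧ (∀ b ∈ s, b ∈ B) ∧ x = dstar a s}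

/-- A lattice is dually `*`-distributive if for every `a` and every nonempty `B` whose
greatest lower bound `m` exists, `a ⊔ m` is the greatest lower bound of `a*B`. -/
def DuallyStarDistributive (α : Type*) [Lattice α] : Prop :=
  ∀ (a : α) (B : Set α) (m : α), B.Nonempty → IsGLB B m → IsGLB (dstarSet a B) (a ⊔ m)

/-- A lattice is dually staircase distributive if the dual `*`-distributive law holds for
every finite nonempty `B`. -/
def DuallyStaircaseDistributive (α : Type*) [Lattice α] : Prop :=
  ∀ (a : α) (B : Finset α) (h : B.Nonempty), IsGLB (dstarSet a ↑B) (a ⊔ B.inf' h id)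

/-- A lattice is dually zipper distributive if for all `a b c`, the greatest lower bound of
`a*{b,c}` exists and equals `a ⊔ (b ⊓ c)`. -/
def DuallyZipperDistributive (α : Type*) [Lattice α] : Prop :=
  ∀ a b c : α, IsGLB (dstarSet a {b, c}) (a ⊔ (b ⊓ c))

/-- A lattice is join-semidistributive. -/
def JoinSemidistributive (α : Type*) [Lattice α] : Prop :=
  ∀ x y z : α, x ⊔ y = x ⊔ z → x ⊔ y = x ⊔ (y ⊓ z)

section Helpers

variable {L : Type*} [Lattice L]

lemma dstar_nil (a : L) : dstar a [] = a := rfl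

lemma dstar_single (a b : L) : dstar a [b] = a ⊔ b := rfl

lemma dstar_cons (a b : L) {s : List L} (hs : s ≠ []) :
    dstar a (b :: s) = a ⊔ (b ⊓ dstar a s) := by
  cases s with
  | nil => exact absurd rfl hs
  | cons c t => rfl

lemma le_dstar (a : L) (s : List L) : a ≤ dstar a s := by
  match s with
  | [] => exact le_rfl
  | [b] => rw [dstar_single]; exact le_sup_left
  | b :: c :: t => rw [dstar_cons a b (by simp)]; exact le_sup_left

lemma sup_le_dstar (a l : L) : ∀ s : List L, s ≠ [] → (∀ b ∈ s, l ≤ b) →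
    a ⊔ l ≤ dstar a s := by
  intro s
  induction s with
  | nil => intro h; exact absurd rfl h
  | cons b t ih =>
    intro _ hb
    cases t with
    | nil =>
      rw [dstar_single]
      exact sup_le_sup_left (hb b (by simp)) a
    | cons c t' =>
      rw [dstar_cons a b (by simp)]
      have h1 : a ⊔ l ≤ dstar a (c :: t') :=
        ih (by simp) (fun x hx => hb x (List.mem_cons_of_mem _ hx))
      exact sup_le le_sup_left
        (le_sup_of_le_right (le_inf (hb b (by simp)) (le_trans le_sup_right h1)))

lemma dstar_cons_le (a b : L) {s : List L} (hs : s ≠ []) :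
    dstar a (b :: s) ≤ dstar a s := by
  rw [dstar_cons a b hs]
  exact sup_le (le_dstar a s) inf_le_right

lemma dstar_append_le (a : L) (t : List L) {s : List L} (hs : s ≠ []) :
    dstar a (t ++ s) ≤ dstar a s := by
  induction t with
  | nil => simp
  | cons x t' ih =>
    have hts : t' ++ s ≠ [] := fun h => hs (List.append_eq_nil_iff.mp h).2
    calc dstar a (x :: (t' ++ s)) ≤ dstar a (t' ++ s) := dstar_cons_le a x hts
      _ ≤ dstar a s := ih

lemma dstarSet_mono (a : L) {B B' : Set L} (h : B ⊆ B') :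
    dstarSet a B ⊆ dstarSet a B' := by
  rintro x ⟨s, hs, hsB, rfl⟩
  exact ⟨s, hs, fun b hb => h (hsB b hb), rfl⟩

lemma sup_mem_lowerBounds_dstarSet (a : L) {B : Set L} {m : L}
    (hm : m ∈ lowerBounds B) : a ⊔ m ∈ lowerBounds (dstarSet a B) := by
  rintro x ⟨s, hs, hsB, rfl⟩
  exact sup_le_dstar a m s hs (fun b hb => hm (hsB b hb))

lemma exists_list_lb {X : Set L} (hd : DirectedOn (· ≥ ·) X) :
    ∀ s : List L, s ≠ [] → (∀ b ∈ s, b ∈ X) → ∃ x ∈ X, ∀ b ∈ s, x ≤ b := by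
  intro s
  induction s with
  | nil => intro h; exact absurd rfl h
  | cons b t ih =>
    intro _ hb
    cases t with
    | nil =>
      exact ⟨b, hb b (by simp), by simp⟩
    | cons c t' =>
      obtain ⟨x, hxX, hxle⟩ := ih (by simp) (fun e he => hb e (List.mem_cons_of_mem _ he))
      obtain ⟨z, hzX, hzb, hzx⟩ := hd b (hb b (by simp)) x hxX
      refine ⟨z, hzX, ?_⟩
      intro e he
      rcases List.mem_cons.mp he with rfl | he'
      · exact hzb
      · exact le_trans hzx (hxle e he')

lemma isGLB_coe_finset (B : Finset L) (h : B.Nonempty) :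
    IsGLB (↑B : Set L) (B.inf' h id) :=
  ⟨fun b hb => Finset.inf'_le id hb, fun l hl => Finset.le_inf' h id fun b hb => hl hb⟩

lemma dsd_to_lc (h : DuallyStarDistributive L) : LowerContinuous L := by
  intro a X m hne hdir hglb
  have h1 := h a X m hne hglb
  constructor
  · rintro _ ⟨x, hx, rfl⟩
    exact sup_le_sup_left (hglb.1 hx) a
  · intro l hl
    refine h1.2 ?_
    rintro w ⟨s, hs, hsX, rfl⟩
    obtain ⟨x, hxX, hxle⟩ := exists_list_lb hdir s hs hsX
    exact le_trans (hl ⟨x, hxX, rfl⟩) (sup_le_dstar a x s hs hxle)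

lemma dsd_to_stair (h : DuallyStarDistributive L) : DuallyStaircaseDistributive L :=
  fun a B hB => h a ↑B _ (Finset.coe_nonempty.mpr hB) (isGLB_coe_finset B hB)

lemma inf'_pair [DecidableEq L] (b c : L) (hne : ({b, c} : Finset L).Nonempty) :
    ({b, c} : Finset L).inf' hne id = b ⊓ c := by
  apply le_antisymm
  · exact le_inf (Finset.inf'_le id (by simp)) (Finset.inf'_le id (by simp))
  · refine Finset.le_inf' hne id ?_
    intro x hx
    rcases Finset.mem_insert.mp hx with rfl | hx'
    · exact inf_le_left
    · rw [Finset.mem_singleton.mp hx']; exact inf_le_right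

lemma stair_to_zip (h : DuallyStaircaseDistributive L) : DuallyZipperDistributive L := by
  classical
  intro a b c
  have hne : ({b, c} : Finset L).Nonempty := ⟨b, by simp⟩
  have h1 := h a {b, c} hne
  rw [inf'_pair b c hne] at h1
  have hc : (↑({b, c} : Finset L) : Set L) = {b, c} := by simp
  rwa [hc] at h1

lemma zip_to_jsd (hz : DuallyZipperDistributive L) : JoinSemidistributive L := by
  intro x y z hxy
  have hall : ∀ s : List L, s ≠ [] → (∀ b ∈ s, b ∈ ({y, z} : Set L)) →
      dstar x s = x ⊔ y := by
    intro s
    induction s with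
    | nil => intro h; exact absurd rfl h
    | cons b t ih =>
      intro _ hmem
      have hb : x ⊔ b = x ⊔ y := by
        rcases hmem b (by simp) with h | h
        · rw [h]
        · rw [Set.mem_singleton_iff.mp h]; exact hxy.symm
      cases t with
      | nil => rw [dstar_single]; exact hb
      | cons c t' =>
        rw [dstar_cons x b (by simp),
          ih (by simp) (fun e he => hmem e (List.mem_cons_of_mem _ he))]
        have hble : b ≤ x ⊔ y := le_trans le_sup_right (le_of_eq hb)
        rw [inf_eq_left.mpr hble]
        exact hb
  have h1 : IsGLB (dstarSet x ({y, z} : Set L)) (x ⊔ y) := by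
    constructor
    · rintro w ⟨s, hs, hsB, rfl⟩
      exact le_of_eq (hall s hs hsB).symm
    · intro l hl
      exact hl ⟨[y], by simp, by simp, (dstar_single x y).symm⟩
  exact h1.unique (hz x y z)

lemma lc_stair_to_dsd (hlc : LowerContinuous L) (hst : DuallyStaircaseDistributive L) :
    DuallyStarDistributive L := by
  classical
  intro a B m hB hglb
  set X := {x : L | ∃ F : Finset L, ∃ hF : F.Nonempty, ↑F ⊆ B ∧ x = F.inf' hF id} with hX
  obtain ⟨b0, hb0⟩ := hB
  have hXne : X.Nonempty :=
    ⟨b0, {b0}, ⟨b0, by simp⟩, by simpa using hb0, by simp⟩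
  have hXdir : DirectedOn (· ≥ ·) X := by
    rintro x ⟨F, hF, hFB, rfl⟩ y ⟨G, hG, hGB, rfl⟩
    have hFG : (F ∪ G).Nonempty := hF.mono Finset.subset_union_left
    refine ⟨(F ∪ G).inf' hFG id, ⟨F ∪ G, hFG, ?_, rfl⟩, ?_, ?_⟩
    · rw [Finset.coe_union]
      exact Set.union_subset hFB hGB
    · exact Finset.le_inf' hF id fun b hb =>
        Finset.inf'_le id (Finset.mem_union_left _ hb)
    · exact Finset.le_inf' hG id fun b hb =>
        Finset.inf'_le id (Finset.mem_union_right _ hb)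
  have hXglb : IsGLB X m := by
    constructor
    · rintro x ⟨F, hF, hFB, rfl⟩
      exact Finset.le_inf' hF id fun b hb => hglb.1 (hFB hb)
    · intro l hl
      refine hglb.2 ?_
      intro b hb
      have : b ∈ X := ⟨{b}, ⟨b, by simp⟩, by simpa using hb, by simp⟩
      exact hl this
  have hmain := hlc a X m hXne hXdir hXglb
  constructor
  · exact sup_mem_lowerBounds_dstarSet a hglb.1
  · intro l hl
    refine hmain.2 ?_
    rintro _ ⟨x, ⟨F, hF, hFB, rfl⟩, rfl⟩
    refine (hst a F hF).2 ?_
    intro y hy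
    exact hl (dstarSet_mono a hFB hy)

lemma complete_lc_jsd_to_stair (hc : ∀ S : Set L, ∃ m : L, IsGLB S m)
    (hlc : LowerContinuous L) (hj : JoinSemidistributive L) :
    DuallyStaircaseDistributive L := by
  intro a B hB
  set m := B.inf' hB id with hm
  set bl := B.toList with hblB
  have hbl : bl ≠ [] := by
    rw [hblB]
    simpa [Finset.toList_eq_nil] using hB.ne_empty
  -- the cycling sequence of lists
  let sl : ℕ → List L := fun n => Nat.rec bl (fun _ s => bl ++ s) n
  have hslS : ∀ n, sl (n + 1) = bl ++ sl n := fun n => rfl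
  have hslne : ∀ n, sl n ≠ [] := by
    intro n
    induction n with
    | zero => exact hbl
    | succ n ih =>
      rw [hslS]
      exact fun h => ih (List.append_eq_nil_iff.mp h).2
  have hblmem : ∀ b ∈ bl, b ∈ (B : Set L) := by
    intro b hb
    rw [hblB] at hb
    exact Finset.mem_toList.mp hb
  have hslB : ∀ n, ∀ b ∈ sl n, b ∈ (B : Set L) := by
    intro n
    induction n with
    | zero => exact hblmem
    | succ n ih =>
      intro b hb
      rw [hslS] at hb
      rcases List.mem_append.mp hb with h | h
      · exact hblmem b h
      · exact ih b h
  set u : ℕ → L := fun n => dstar a (sl n) with hu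
  have hmemu : ∀ n, u n ∈ dstarSet a ↑B := fun n => ⟨sl n, hslne n, hslB n, rfl⟩
  have huanti : ∀ n, u (n + 1) ≤ u n := by
    intro n
    show dstar a (sl (n + 1)) ≤ dstar a (sl n)
    rw [hslS]
    exact dstar_append_le a bl (hslne n)
  have hmono : Antitone u := antitone_nat_of_succ_le huanti
  obtain ⟨d, hd⟩ := hc (Set.range u)
  have hdle : ∀ n, d ≤ u n := fun n => hd.1 ⟨n, rfl⟩
  have hale : ∀ n, a ≤ u n := fun n => le_dstar a _
  have key : ∀ b ∈ B, d = a ⊔ (b ⊓ d) := by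
    intro b hb
    have hk : ∀ n, u (n + 1) ≤ a ⊔ (b ⊓ u n) := by
      intro n
      have hbbl : b ∈ bl := by rw [hblB]; exact Finset.mem_toList.mpr hb
      obtain ⟨p, q, hpq⟩ := List.append_of_mem hbbl
      have h1 : sl (n + 1) = p ++ (b :: (q ++ sl n)) := by
        rw [hslS, hpq]
        simp [List.append_assoc]
      have hqs : q ++ sl n ≠ [] := fun h => hslne n (List.append_eq_nil_iff.mp h).2
      calc u (n + 1) = dstar a (p ++ (b :: (q ++ sl n))) := by
            show dstar a (sl (n + 1)) = _; rw [h1]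
        _ ≤ dstar a (b :: (q ++ sl n)) := dstar_append_le a p (by simp)
        _ = a ⊔ (b ⊓ dstar a (q ++ sl n)) := dstar_cons a b hqs
        _ ≤ a ⊔ (b ⊓ dstar a (sl n)) :=
            sup_le_sup_left (inf_le_inf_left b (dstar_append_le a q (hslne n))) a
    have hbd : IsGLB (Set.range fun n => b ⊓ u n) (b ⊓ d) := by
      constructor
      · rintro x ⟨n, rfl⟩
        exact inf_le_inf_left b (hdle n)
      · intro l hl
        refine le_inf (le_trans (hl ⟨0, rfl⟩) inf_le_left) (hd.2 ?_)
        rintro x ⟨n, rfl⟩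
        exact le_trans (hl ⟨n, rfl⟩) inf_le_right
    have hdir : DirectedOn (· ≥ ·) (Set.range fun n => b ⊓ u n) := by
      rintro _ ⟨i, rfl⟩ _ ⟨j, rfl⟩
      exact ⟨b ⊓ u (max i j), ⟨max i j, rfl⟩,
        inf_le_inf_left b (hmono (le_max_left i j)),
        inf_le_inf_left b (hmono (le_max_right i j))⟩
    have h2 := hlc a (Set.range fun n => b ⊓ u n) (b ⊓ d) (Set.range_nonempty _) hdir hbd
    have h3 : IsGLB ((fun x => a ⊔ x) '' Set.range fun n => b ⊓ u n) d := by
      constructor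
      · rintro x ⟨_, ⟨n, rfl⟩, rfl⟩
        exact le_trans (hdle (n + 1)) (hk n)
      · intro l hl
        refine hd.2 ?_
        rintro x ⟨n, rfl⟩
        exact le_trans (hl ⟨_, ⟨n, rfl⟩, rfl⟩) (sup_le (hale n) inf_le_right)
    exact h3.unique h2
  -- iterate join-semidistributivity over the finset
  have hind : ∀ F : Finset L, ∀ hF : F.Nonempty, (∀ b ∈ F, d = a ⊔ (b ⊓ d)) →
      d = a ⊔ (F.inf' hF id ⊓ d) := by
    intro F
    induction F using Finset.cons_induction with
    | empty => intro hF; exact absurd hF (by simp)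
    | cons c s hcs ih =>
      intro hF hmem
      rcases s.eq_empty_or_nonempty with rfl | hs
      · have : (Finset.cons c ∅ hcs).inf' hF id = c := by simp
        rw [this]
        exact hmem c (by simp)
      · have h1 : d = a ⊔ (c ⊓ d) := hmem c (by simp)
        have h2 : d = a ⊔ (s.inf' hs id ⊓ d) :=
          ih hs (fun b hb => hmem b (Finset.mem_cons_of_mem hb))
        have h3 := hj a (c ⊓ d) (s.inf' hs id ⊓ d) (h1.symm.trans h2)
        have h4 : (c ⊓ d) ⊓ (s.inf' hs id ⊓ d) = (c ⊓ s.inf' hs id) ⊓ d := by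
          apply le_antisymm
          · exact le_inf (le_inf (le_trans inf_le_left inf_le_left)
              (le_trans inf_le_right inf_le_left)) (le_trans inf_le_left inf_le_right)
          · exact le_inf (le_inf (le_trans inf_le_left inf_le_left) inf_le_right)
              (le_inf (le_trans inf_le_left inf_le_right) inf_le_right)
        have h5 : (Finset.cons c s hcs).inf' hF id = c ⊓ s.inf' hs id := by
          rw [Finset.inf'_cons hs]; rfl
        rw [h5]
        calc d = a ⊔ (c ⊓ d) := h1
          _ = a ⊔ ((c ⊓ d) ⊓ (s.inf' hs id ⊓ d)) := h3
          _ = a ⊔ ((c ⊓ s.inf' hs id) ⊓ d) := by rw [h4]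
  have hdm : d ≤ a ⊔ m := by
    calc d = a ⊔ (m ⊓ d) := hind B hB key
      _ ≤ a ⊔ m := sup_le_sup_left inf_le_left a
  constructor
  · exact sup_mem_lowerBounds_dstarSet a (isGLB_coe_finset B hB).1
  · intro l hl
    have hld : l ≤ d := hd.2 (by rintro x ⟨n, rfl⟩; exact hl (hmemu n))
    exact le_trans hld hdm

end Helpers

/-- (a) A lattice is dually `*`-distributive iff it is lower continuous and dually staircase
distributive; (b) dual `*`-distributivity implies lower continuity plus dual zipper
distributivity, which in turn implies lower continuity plus join-semidistributivity;
(c) if every subset has a greatest lower bound, all four conditions are equivalent. -/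
theorem duallyStarDistributive_iff {L : Type*} [Lattice L] :
    (DuallyStarDistributive L ↔ (LowerContinuous L ∧ DuallyStaircaseDistributive L)) ∧
    ((DuallyStarDistributive L → LowerContinuous L ∧ DuallyZipperDistributive L) ∧
      ((LowerContinuous L ∧ DuallyZipperDistributive L) →
        (LowerContinuous L ∧ JoinSemidistributive L))) ∧
    ((∀ S : Set L, ∃ m : L, IsGLB S m) →
      ((DuallyStarDistributive L ↔ (LowerContinuous L ∧ DuallyStaircaseDistributive L)) ∧
       (DuallyStarDistributive L ↔ (LowerContinuous L ∧ DuallyZipperDistributive L)) ∧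
       (DuallyStarDistributive L ↔ (LowerContinuous L ∧ JoinSemidistributive L)))) := by
  
  have e1 : DuallyStarDistributive L ↔ (LowerContinuous L ∧ DuallyStaircaseDistributive L) :=
    ⟨fun h => ⟨dsd_to_lc h, dsd_to_stair h⟩, fun ⟨h1, h2⟩ => lc_stair_to_dsd h1 h2⟩
  refine ⟨e1, ⟨fun h => ⟨dsd_to_lc h, stair_to_zip (dsd_to_stair h)⟩,
    fun ⟨h1, h2⟩ => ⟨h1, zip_to_jsd h2⟩⟩, ?_⟩
  intro hc
  have e3 : DuallyStarDistributive L ↔ (LowerContinuous L ∧ JoinSemidistributive L) :=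
    ⟨fun h => ⟨dsd_to_lc h, zip_to_jsd (stair_to_zip (dsd_to_stair h))⟩,
      fun ⟨h1, h2⟩ => lc_stair_to_dsd h1 (complete_lc_jsd_to_stair hc h1 h2)⟩
  refine ⟨e1, ⟨fun h => ⟨dsd_to_lc h, stair_to_zip (dsd_to_stair h)⟩, ?_⟩, e3⟩
  rintro ⟨h1, h2⟩
  exact e3.mpr ⟨h1, zip_to_jsd h2⟩
end

section
/- Let L be a locally finite, join-semidistributive lattice. Then the filter lattice Fil L, consisting of all filters of L ordered by reverse inclusion, is join-semidistributive. -/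
/-- A filter of a lattice: a (possibly empty) upper subset closed under finite meets. -/
def IsFilterSet {α : Type*} [SemilatticeInf α] (F : Set α) : Prop :=
  (∀ x ∈ F, ∀ y, x ≤ y → y ∈ F) ∧ ∀ x ∈ F, ∀ y ∈ F, x ⊓ y ∈ F

/-- The filter lattice `Fil L`: all filters of `L`, ordered by reverse inclusion. -/
def FilterLattice (α : Type*) [Lattice α] : Type _ :=
  {F : Set α // IsFilterSet F}

namespace FilterLattice

variable {α : Type*} [Lattice α]

/-- Filters are ordered by reverse inclusion. -/
instance : PartialOrder (FilterLattice α) where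
  le F G := G.1 ⊆ F.1
  le_refl F := Set.Subset.rfl
  le_trans F G H hFG hGH := Set.Subset.trans hGH hFG
  le_antisymm F G hFG hGF := Subtype.ext (Set.Subset.antisymm hGF hFG)

instance : SupSet (FilterLattice α) :=
  ⟨fun s => ⟨{x | ∀ F ∈ s, x ∈ F.1},
    fun x hx y hxy F hF => F.2.1 x (hx F hF) y hxy,
    fun x hx y hy F hF => F.2.2 x (hx F hF) y (hy F hF)⟩⟩

/-- `Fil L` is a complete lattice: the join of a family of filters is their intersection. -/
instance : CompleteLattice (FilterLattice α) :=
  completeLatticeOfSup _ fun s =>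
    ⟨fun F hF x hx => hx F hF, fun G hG x hx F hF => hG hF hx⟩

end FilterLattice

namespace FilterLatticeAux

variable {α : Type*} [Lattice α]

lemma le_iff {X Y : FilterLattice α} : X ≤ Y ↔ Y.1 ⊆ X.1 := Iff.rfl

/-- Intersection of two filters is a filter. -/
lemma inter_isFilterSet (X Y : FilterLattice α) : IsFilterSet (X.1 ∩ Y.1) :=
  ⟨fun x hx y hxy => ⟨X.2.1 x hx.1 y hxy, Y.2.1 x hx.2 y hxy⟩,
   fun x hx y hy => ⟨X.2.2 x hx.1 y hy.1, Y.2.2 x hx.2 y hy.2⟩⟩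

/-- The join of two filters is their intersection. -/
lemma sup_val (X Y : FilterLattice α) : (X ⊔ Y).1 = X.1 ∩ Y.1 := by
  have h : X ⊔ Y = ⟨X.1 ∩ Y.1, inter_isFilterSet X Y⟩ := by
    apply le_antisymm
    · exact sup_le (fun w hw => hw.1) (fun w hw => hw.2)
    · exact fun w hw => ⟨(le_sup_left : X ≤ X ⊔ Y) hw, (le_sup_right : Y ≤ X ⊔ Y) hw⟩
  rw [h]

/-- The explicit filter generated by the union of two filters. -/
def genSet (Y Z : FilterLattice α) : Set α :=
  Y.1 ∪ Z.1 ∪ {w | ∃ a ∈ Y.1, ∃ b ∈ Z.1, a ⊓ b ≤ w}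

lemma genSet_isFilterSet (Y Z : FilterLattice α) : IsFilterSet (genSet Y Z) := by
  constructor
  · rintro w (⟨hw | hw⟩ | ⟨a, ha, b, hb, hab⟩) v hv
    · exact Or.inl (Or.inl (Y.2.1 w hw v hv))
    · exact Or.inl (Or.inr (Z.2.1 w hw v hv))
    · exact Or.inr ⟨a, ha, b, hb, hab.trans hv⟩
  · rintro w₁ (⟨h1 | h1⟩ | ⟨a, ha, b, hb, hab⟩) w₂ (⟨h2 | h2⟩ | ⟨a', ha', b', hb', hab'⟩)
    · exact Or.inl (Or.inl (Y.2.2 w₁ h1 w₂ h2))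
    · exact Or.inr ⟨w₁, h1, w₂, h2, le_refl _⟩
    · refine Or.inr ⟨w₁ ⊓ a', Y.2.2 w₁ h1 a' ha', b', hb', ?_⟩
      calc w₁ ⊓ a' ⊓ b' = w₁ ⊓ (a' ⊓ b') := inf_assoc ..
        _ ≤ w₁ ⊓ w₂ := inf_le_inf_left _ hab'
    · exact Or.inr ⟨w₂, h2, w₁, h1, by rw [inf_comm]⟩
    · exact Or.inl (Or.inr (Z.2.2 w₁ h1 w₂ h2))
    · refine Or.inr ⟨a', ha', w₁ ⊓ b', Z.2.2 w₁ h1 b' hb', ?_⟩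
      calc a' ⊓ (w₁ ⊓ b') = w₁ ⊓ (a' ⊓ b') := by rw [inf_left_comm]
        _ ≤ w₁ ⊓ w₂ := inf_le_inf_left _ hab'
    · refine Or.inr ⟨w₂ ⊓ a, Y.2.2 w₂ h2 a ha, b, hb, ?_⟩
      calc w₂ ⊓ a ⊓ b = w₂ ⊓ (a ⊓ b) := inf_assoc ..
        _ ≤ w₂ ⊓ w₁ := inf_le_inf_left _ hab
        _ = w₁ ⊓ w₂ := inf_comm ..
    · refine Or.inr ⟨a, ha, w₂ ⊓ b, Z.2.2 w₂ h2 b hb, ?_⟩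
      calc a ⊓ (w₂ ⊓ b) = w₂ ⊓ (a ⊓ b) := by rw [inf_left_comm]
        _ ≤ w₂ ⊓ w₁ := inf_le_inf_left _ hab
        _ = w₁ ⊓ w₂ := inf_comm ..
    · refine Or.inr ⟨a ⊓ a', Y.2.2 a ha a' ha', b ⊓ b', Z.2.2 b hb b' hb', ?_⟩
      calc a ⊓ a' ⊓ (b ⊓ b') = a ⊓ b ⊓ (a' ⊓ b') := by
            rw [inf_assoc, inf_assoc, inf_left_comm a' b b']
        _ ≤ w₁ ⊓ w₂ := inf_le_inf hab hab'

/-- The meet of two filters is contained in the explicit generated filter. -/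
lemma inf_val_subset (Y Z : FilterLattice α) : (Y ⊓ Z).1 ⊆ genSet Y Z := by
  set G : FilterLattice α := ⟨genSet Y Z, genSet_isFilterSet Y Z⟩ with hG
  have hY : G ≤ Y := fun w hw => Or.inl (Or.inl hw)
  have hZ : G ≤ Z := fun w hw => Or.inl (Or.inr hw)
  exact le_inf hY hZ

end FilterLatticeAux

open FilterLatticeAux in
/-- If `L` is locally finite (the sublattice generated by any finite subset is finite) and
join-semidistributive, then the filter lattice `Fil L` is join-semidistributive. -/
theorem filterLattice_joinSemidistributive {L : Type*} [Lattice L]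
    (hlf : ∀ S : Set L, S.Finite → (latticeClosure S).Finite)
    (hjsd : JoinSemidistributive L) :
    JoinSemidistributive (FilterLattice L) := by
  intro X Y Z h
  have hset : X.1 ∩ Y.1 = X.1 ∩ Z.1 := by rw [← sup_val, ← sup_val, h]
  apply le_antisymm
  swap
  · exact sup_le_sup_left inf_le_left X
  -- need : (X ⊔ (Y ⊓ Z)).1 ⊆ (X ⊔ Y).1
  intro x hx
  rw [sup_val] at hx ⊢
  obtain ⟨hxX, hxYZ⟩ := hx
  refine ⟨hxX, ?_⟩
  -- goal : x ∈ Y.1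
  have hxG := inf_val_subset Y Z hxYZ
  rcases hxG with (hxY | hxZ) | ⟨a, ha, b, hb, hab⟩
  · exact hxY
  · exact (hset ▸ ⟨hxX, hxZ⟩ : x ∈ X.1 ∩ Y.1).2
  -- main case : a ∈ Y, b ∈ Z, a ⊓ b ≤ x
  set C : Set L := latticeClosure {x, a, b} with hC
  have hCfin : C.Finite := hlf _ (Set.toFinite _)
  have hsub : IsSublattice C := isSublattice_latticeClosure
  have hxC : x ∈ C := subset_latticeClosure (by simp)
  have haC : a ∈ C := subset_latticeClosure (by simp)
  have hbC : b ∈ C := subset_latticeClosure (by simp)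
  set T : Set (L × L) :=
    {p | p.1 ∈ C ∧ p.2 ∈ C ∧ p.1 ∈ Y.1 ∧ p.2 ∈ Z.1 ∧ p.1 ≤ a ∧ p.2 ≤ b} with hT
  have hTfin : T.Finite := (hCfin.prod hCfin).subset (fun p hp => ⟨hp.1, hp.2.1⟩)
  have hTne : T.Nonempty := ⟨(a, b), haC, hbC, ha, hb, le_refl _, le_refl _⟩
  obtain ⟨⟨a₀, b₀⟩, hmem, hmin⟩ : ∃ p ∈ T, ∀ p' ∈ T, id p' ≤ id p → id p = id p' := by
    obtain ⟨p, hp⟩ := hTfin.exists_minimal hTne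
    exact ⟨p, hp.1, fun p' hp' hle => le_antisymm (hp.2 hp' hle) hle⟩
  obtain ⟨ha₀C, hb₀C, ha₀Y, hb₀Z, ha₀a, hb₀b⟩ := hmem
  -- the improved pair
  have hxb₀Y : x ⊔ b₀ ∈ Y.1 := by
    have : x ⊔ b₀ ∈ X.1 ∩ Z.1 :=
      ⟨X.2.1 x hxX _ le_sup_left, Z.2.1 b₀ hb₀Z _ le_sup_right⟩
    rw [← hset] at this
    exact this.2
  have hxa₀Z : x ⊔ a₀ ∈ Z.1 := by
    have : x ⊔ a₀ ∈ X.1 ∩ Y.1 :=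
      ⟨X.2.1 x hxX _ le_sup_left, Y.2.1 a₀ ha₀Y _ le_sup_right⟩
    rw [hset] at this
    exact this.2
  have hmemT : (a₀ ⊓ (x ⊔ b₀), b₀ ⊓ (x ⊔ a₀)) ∈ T := by
    refine ⟨hsub.2 ha₀C (hsub.1 hxC hb₀C), hsub.2 hb₀C (hsub.1 hxC ha₀C),
      Y.2.2 _ ha₀Y _ hxb₀Y, Z.2.2 _ hb₀Z _ hxa₀Z, inf_le_left.trans ha₀a,
      inf_le_left.trans hb₀b⟩
  have heq := hmin _ hmemT (Prod.mk_le_mk.2 ⟨inf_le_left, inf_le_left⟩)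
  have ha₀le : a₀ ≤ x ⊔ b₀ := by
    have : a₀ = a₀ ⊓ (x ⊔ b₀) := congrArg Prod.fst heq
    rw [this]; exact inf_le_right
  have hb₀le : b₀ ≤ x ⊔ a₀ := by
    have : b₀ = b₀ ⊓ (x ⊔ a₀) := congrArg Prod.snd heq
    rw [this]; exact inf_le_right
  have hsupeq : x ⊔ a₀ = x ⊔ b₀ :=
    le_antisymm (sup_le le_sup_left ha₀le) (sup_le le_sup_left hb₀le)
  have hinfle : a₀ ⊓ b₀ ≤ x := (inf_le_inf ha₀a hb₀b).trans hab
  have := hjsd x a₀ b₀ hsupeq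
  rw [sup_eq_left.2 hinfle] at this
  exact Y.2.1 a₀ ha₀Y x (le_sup_right.trans_eq this)
end

section
/- Every lattice satisfying the axiom (SD^ω_∨) is dually staircase distributive. -/
/-- `diam s x` is `s◊x`, defined (with the sequence written in reverse, head = last entry) by
`∅◊x = x` and `(s⌢⟨a⟩)◊x = a ⊔ (s◊x)` if `|s|` is even, `a ⊓ (s◊x)` if `|s|` is odd. -/
def diam {α : Type*} [Lattice α] : List α → α → α
  | [], x => x
  | a :: s, x => if s.length % 2 = 0 then a ⊔ diam s x else a ⊓ diam s x

/-- The axiom `(SD^ω_∨)`. -/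
def SDomega (α : Type*) [Lattice α] : Prop :=
  ∀ (s : List α) (a b c : α),
    IsGLB ((fun x => diam s x) '' dstarSet a {b, c}) (diam s (a ⊔ (b ⊓ c)))

namespace SDProof

variable {L : Type*} [Lattice L]

/-- Seeded staircase fold. -/
def F (a y : L) (t : List L) : L := t.foldr (fun e X => a ⊔ (e ⊓ X)) y

@[simp] lemma F_nil (a y : L) : F a y [] = y := rfl

@[simp] lemma F_cons (a y e : L) (t : List L) : F a y (e :: t) = a ⊔ (e ⊓ F a y t) := rfl

lemma F_append (a y : L) (t v : List L) : F a y (t ++ v) = F a (F a y v) t :=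
  List.foldr_append

@[simp] lemma dstar_singleton (a b : L) : dstar a [b] = a ⊔ b := rfl

lemma dstar_cons (a e : L) {t : List L} (ht : t ≠ []) :
    dstar a (e :: t) = a ⊔ (e ⊓ dstar a t) := by
  cases t with
  | nil => exact absurd rfl ht
  | cons x s => rfl

lemma le_dstar (a : L) (t : List L) : a ≤ dstar a t := by
  cases t with
  | nil => exact le_rfl
  | cons x s => cases s with
    | nil => exact le_sup_left
    | cons y r => exact le_sup_left

lemma le_F {a y : L} (hay : a ≤ y) (t : List L) : a ≤ F a y t := by
  cases t with
  | nil => exact hay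
  | cons e t => exact le_sup_left

lemma F_le_seed {a y : L} (hay : a ≤ y) (t : List L) : F a y t ≤ y := by
  induction t with
  | nil => exact le_rfl
  | cons e t ih => exact sup_le hay (inf_le_right.trans ih)

lemma F_mono_seed (a : L) {y y' : L} (hyy : y ≤ y') (t : List L) : F a y t ≤ F a y' t := by
  induction t with
  | nil => exact hyy
  | cons e t ih => exact sup_le_sup_left (inf_le_inf_left e ih) a

lemma F_le_dstar (a y : L) (t : List L) (ht : t ≠ []) : F a y t ≤ dstar a t := by
  induction t with
  | nil => exact absurd rfl ht
  | cons e t ih =>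
    cases t with
    | nil => exact sup_le_sup_left inf_le_left a
    | cons x s =>
      rw [dstar_cons a e (List.cons_ne_nil x s)]
      exact sup_le_sup_left (inf_le_inf_left e (ih (List.cons_ne_nil x s))) a

lemma dstar_eq_F (a : L) {v : List L} (hv : v ≠ []) :
    ∀ w : List L, dstar a (w ++ v) = F a (dstar a v) w := by
  intro w
  induction w with
  | nil => rfl
  | cons e w ih =>
    rw [List.cons_append, dstar_cons a e (by simp [hv]), ih, F_cons]

lemma glbA_lb {a m : L} : ∀ {t : List L}, t ≠ [] → (∀ e ∈ t, m ≤ e) → a ⊔ m ≤ dstar a t := by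
  intro t
  induction t with
  | nil => intro ht; exact absurd rfl ht
  | cons e t ih =>
    intro _ hm
    cases t with
    | nil => exact sup_le_sup_left (hm e (by simp)) a
    | cons x s =>
      rw [dstar_cons a e (List.cons_ne_nil x s)]
      refine sup_le le_sup_left (le_trans (le_inf (hm e (by simp)) ?_) le_sup_right)
      exact le_sup_right.trans (ih (List.cons_ne_nil x s) fun e' he' => hm e' (by simp [he']))

lemma glbB_lb {a m y : L} : ∀ {t : List L}, t ≠ [] → (∀ e ∈ t, m ≤ e) →
    a ⊔ (m ⊓ y) ≤ F a y t := by
  intro t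
  induction t with
  | nil => intro ht; exact absurd rfl ht
  | cons e t ih =>
    intro _ hm
    cases t with
    | nil => exact sup_le_sup_left (inf_le_inf_right y (hm e (by simp))) a
    | cons x s =>
      rw [F_cons]
      refine sup_le le_sup_left (le_trans (le_inf (inf_le_left.trans (hm e (by simp))) ?_)
        le_sup_right)
      exact le_sup_right.trans (ih (List.cons_ne_nil x s) fun e' he' => hm e' (by simp [he']))

lemma diam_mono (s : List L) : Monotone (diam s) := by
  induction s with
  | nil => exact fun x y h => h
  | cons e s ih =>
    intro x y h
    simp only [diam]
    split
    · exact sup_le_sup_left (ih h) e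
    · exact inf_le_inf_left e (ih h)

lemma diam_append_even {t : List L} (ht : t.length % 2 = 0) (s : List L) (x : L) :
    diam (s ++ t) x = diam s (diam t x) := by
  induction s with
  | nil => rfl
  | cons e s ih =>
    simp only [List.cons_append, diam, ih, List.append_eq]
    have : (s ++ t).length % 2 = s.length % 2 := by
      simp only [List.length_append]; omega
    rw [this]

def ext : List L → L → List L
  | [], a => [a]
  | [p], a => [p ⊔ a]
  | z :: s, a => z :: ext s a

lemma ext_length {s : List L} (hs : s ≠ []) (a : L) : (ext s a).length = s.length := by
  induction s with
  | nil => exact absurd rfl hs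
  | cons z s ih =>
    cases s with
    | nil => rfl
    | cons p s' => simp only [ext, List.length_cons, ih (List.cons_ne_nil p s')]

lemma diam_ext (s : List L) (a x : L) : diam (ext s a) x = diam s (a ⊔ x) := by
  induction s with
  | nil => rfl
  | cons z s ih =>
    cases s with
    | nil => simp [ext, diam, sup_assoc]
    | cons p s' =>
      show diam (z :: ext (p :: s') a) x = diam (z :: p :: s') (a ⊔ x)
      simp only [diam, ext_length (List.cons_ne_nil p s') a, ih]

def comp (a : L) : List L → List L → List L
  | s, [] => s
  | s, e :: w => comp a (ext s a ++ [e, a]) w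

lemma diam_comp (a : L) : ∀ (w s : List L) (X : L), a ≤ X →
    diam (comp a s w) X = diam s (F a X w) := by
  intro w
  induction w with
  | nil => intro s X _; rfl
  | cons e w ih =>
    intro s X hX
    show diam (comp a (ext s a ++ [e, a]) w) X = _
    rw [ih _ X hX, diam_append_even (by simp), diam_ext]
    have h1 : diam [e, a] (F a X w) = e ⊓ (a ⊔ F a X w) := by simp [diam]
    rw [h1, sup_eq_right.mpr (le_F hX w)]
    rfl

lemma exists_last_bad {α : Type*} {u : List α} {P : α → Prop} (hu : ¬ ∀ e ∈ u, P e) :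
    ∃ w d v, u = w ++ d :: v ∧ ¬ P d ∧ ∀ e ∈ v, P e := by
  induction u with
  | nil => exact absurd (by simp) hu
  | cons e u ih =>
    by_cases h : ∀ x ∈ u, P x
    · refine ⟨[], e, u, rfl, fun hPe => hu ?_, h⟩
      intro x hx
      rcases List.mem_cons.mp hx with rfl | hx'
      · exact hPe
      · exact h x hx'
    · obtain ⟨w, d, v, rfl, hd, hv⟩ := ih h
      exact ⟨e :: w, d, v, rfl, hd, hv⟩

@[simp] lemma diam_nil {L : Type*} [Lattice L] (x : L) : diam [] x = x := rfl

end SDProof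

namespace SDProof

variable {L : Type*} [Lattice L]

/-- Seeded analogue of `dstarSet`. -/
def FSet (a y : L) (B : Set L) : Set L :=
  {z | ∃ t : List L, t ≠ [] ∧ (∀ e ∈ t, e ∈ B) ∧ z = F a y t}

lemma main (hSD : SDomega L) :
    ∀ (n : ℕ) (B : Finset L) (hB : B.Nonempty), B.card = n → ∀ (a : L) (s : List L),
      IsGLB ((fun x => diam s x) '' dstarSet a ↑B) (diam s (a ⊔ B.inf' hB id)) ∧
      ∀ y : L, a ≤ y →
        IsGLB ((fun x => diam s x) '' FSet a y ↑B) (diam s (a ⊔ (B.inf' hB id ⊓ y))) := by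
  intro n
  induction n using Nat.strong_induction_on with
  | _ n IH =>
  intro B hB hcard a s
  classical
  cases n with
  | zero => exact absurd (Finset.card_eq_zero.mp hcard) hB.ne_empty
  | succ k =>
  obtain ⟨b, C, hbC, rfl, hCcard⟩ := Finset.card_eq_succ.mp hcard
  rcases C.eq_empty_or_nonempty with rfl | hC
  · -- base case : B = {b}
    have hinfb : (insert b (∅ : Finset L)).inf' hB id = b := by simp
    rw [hinfb]
    constructor
    · constructor
      · rintro z ⟨w, ⟨t, ht, htB, rfl⟩, rfl⟩
        refine diam_mono s (glbA_lb ht fun e he => ?_)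
        have : e = b := by simpa using htB e he
        exact this.ge
      · intro x hx
        have hmem : diam s (dstar a [b]) ∈ (fun x => diam s x) '' dstarSet a ↑(insert b (∅ : Finset L)) :=
          ⟨dstar a [b], ⟨[b], by simp, by simp, rfl⟩, rfl⟩
        simpa using hx hmem
    · intro y hay
      constructor
      · rintro z ⟨w, ⟨t, ht, htB, rfl⟩, rfl⟩
        refine diam_mono s (glbB_lb ht fun e he => ?_)
        have : e = b := by simpa using htB e he
        exact this.ge
      · intro x hx
        have hmem : diam s (F a y [b]) ∈ (fun x => diam s x) '' FSet a y ↑(insert b (∅ : Finset L)) :=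
          ⟨F a y [b], ⟨[b], by simp, by simp, rfl⟩, rfl⟩
        simpa [F] using hx hmem
  · -- inductive step
    have hinf : (insert b C).inf' hB id = b ⊓ C.inf' hC id := by
      simpa using Finset.inf'_insert (b := b) hC id
    rw [hinf]
    have IHC := fun (s' : List L) => IH k (Nat.lt_succ_self k) C hC hCcard a s'
    constructor
    · -- part (A)
      constructor
      · rintro z ⟨w, ⟨t, ht, htB, rfl⟩, rfl⟩
        refine diam_mono s (glbA_lb ht fun e he => ?_)
        rcases Finset.mem_insert.mp (by exact_mod_cast htB e he) with rfl | heC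
        · exact inf_le_left
        · exact inf_le_right.trans (Finset.inf'_le id heC)
      · intro x hx
        have IC : ∀ (m : ℕ) (u : List L), u ≠ [] →
            (∀ e ∈ u, e ∈ (↑(insert b C) : Set L) ∨ e = C.inf' hC id) →
            u.countP (fun e => decide (e ∉ (↑(insert b C) : Set L))) ≤ m →
            x ≤ diam s (dstar a u) := by
          intro m
          induction m with
          | zero =>
            intro u hu _ hcount
            have hall : ∀ e ∈ u, e ∈ (↑(insert b C) : Set L) := by
              intro e he
              have h0 := List.countP_eq_zero.mp (Nat.le_zero.mp hcount) e he
              simp only [decide_eq_true_eq, not_not] at h0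
              exact h0
            exact hx ⟨dstar a u, ⟨u, hu, hall, rfl⟩, rfl⟩
          | succ m ihm =>
            intro u hu halpha hcount
            by_cases hall : ∀ e ∈ u, e ∈ (↑(insert b C) : Set L)
            · exact hx ⟨dstar a u, ⟨u, hu, hall, rfl⟩, rfl⟩
            · obtain ⟨w, d, v, rfl, hd, hv⟩ := exists_last_bad hall
              have hdc : d = C.inf' hC id := by
                rcases halpha d (by simp) with h' | h'
                · exact absurd h' hd
                · exact h'
              subst hdc
              have hcw : w.countP (fun e => decide (e ∉ (↑(insert b C) : Set L))) ≤ m := by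
                have h2 : (fun e => decide (e ∉ (↑(insert b C) : Set L))) (C.inf' hC id)
                    = true := by simpa using hd
                have h3 := List.countP_cons_of_pos
                  (p := fun e => decide (e ∉ (↑(insert b C) : Set L))) (l := v) h2
                have h1 := hcount
                rw [List.countP_append, h3] at h1
                omega
              have halw : ∀ e ∈ w, e ∈ (↑(insert b C) : Set L) ∨ e = C.inf' hC id :=
                fun e he => halpha e (by simp [he])
              have hgoal : dstar a (w ++ C.inf' hC id :: v) = F a (dstar a (C.inf' hC id :: v)) w :=
                dstar_eq_F a (List.cons_ne_nil _ v) w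
              rw [hgoal, ← diam_comp a w s _ (le_dstar a _)]
              cases v with
              | nil =>
                refine ((IH k (Nat.lt_succ_self k) C hC hCcard a (comp a s w)).1).2 ?_
                rintro z ⟨w', ⟨t', ht', ht'C, rfl⟩, rfl⟩
                show x ≤ diam (comp a s w) (dstar a t')
                rw [diam_comp a w _ _ (le_dstar a _), ← dstar_eq_F a ht' w]
                refine ihm (w ++ t') (by simp [ht']) ?_ ?_
                · intro e he
                  rcases List.mem_append.mp he with h' | h'
                  · exact halw e h'
                  · exact Or.inl (by simp [Finset.mem_coe.mp (ht'C e h')])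
                · rw [List.countP_append]
                  have hz : t'.countP (fun e => decide (e ∉ (↑(insert b C) : Set L))) = 0 := by
                    refine List.countP_eq_zero.mpr fun e he => ?_
                    simp only [decide_eq_true_eq, not_not]
                    exact Finset.mem_coe.mpr (Finset.mem_insert_of_mem (Finset.mem_coe.mp (ht'C e he)))
                  omega
              | cons v0 vs =>
                have hvne : (v0 :: vs) ≠ [] := List.cons_ne_nil v0 vs
                rw [dstar_cons a _ hvne]
                refine ((IH k (Nat.lt_succ_self k) C hC hCcard a (comp a s w)).2
                  (dstar a (v0 :: vs)) (le_dstar a _)).2 ?_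
                rintro z ⟨w', ⟨t', ht', ht'C, rfl⟩, rfl⟩
                show x ≤ diam (comp a s w) (F a (dstar a (v0 :: vs)) t')
                rw [diam_comp a w _ _ (le_F (le_dstar a _) t'),
                  ← dstar_eq_F a hvne t', ← dstar_eq_F a (by simp [hvne] : t' ++ v0 :: vs ≠ []) w]
                refine ihm (w ++ (t' ++ v0 :: vs)) (by simp) ?_ ?_
                · intro e he
                  rcases List.mem_append.mp he with h' | h'
                  · exact halw e h'
                  · rcases List.mem_append.mp h' with h'' | h''
                    · exact Or.inl (by simp [Finset.mem_coe.mp (ht'C e h'')])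
                    · exact halpha e (by simp [h''])
                · rw [List.countP_append, List.countP_append]
                  have hz1 : t'.countP (fun e => decide (e ∉ (↑(insert b C) : Set L))) = 0 := by
                    refine List.countP_eq_zero.mpr fun e he => ?_
                    simp only [decide_eq_true_eq, not_not]
                    exact Finset.mem_coe.mpr (Finset.mem_insert_of_mem (Finset.mem_coe.mp (ht'C e he)))
                  have hz2 : (v0 :: vs).countP (fun e => decide (e ∉ (↑(insert b C) : Set L))) = 0 := by
                    refine List.countP_eq_zero.mpr fun e he => ?_
                    simp only [decide_eq_true_eq, not_not]
                    exact hv e he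
                  omega
        refine (hSD s a b (C.inf' hC id)).2 ?_
        rintro z ⟨w, ⟨u, hu, huBC, rfl⟩, rfl⟩
        refine IC (u.countP (fun e => decide (e ∉ (↑(insert b C) : Set L)))) u hu ?_ le_rfl
        intro e he
        rcases Set.mem_insert_iff.mp (huBC e he) with rfl | h'
        · exact Or.inl (by simp)
        · exact Or.inr (Set.mem_singleton_iff.mp h')
    · -- part (B)
      intro y hay
      rw [inf_assoc]
      constructor
      · rintro z ⟨w, ⟨t, ht, htB, rfl⟩, rfl⟩
        rw [← inf_assoc]
        refine diam_mono s (glbB_lb ht fun e he => ?_)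
        rcases Finset.mem_insert.mp (by exact_mod_cast htB e he) with rfl | heC
        · exact inf_le_left
        · exact inf_le_right.trans (Finset.inf'_le id heC)
      · intro x hx
        have IC : ∀ (m : ℕ) (u : List L), u ≠ [] →
            (∀ e ∈ u, e ∈ (↑(insert b C) : Set L) ∨ e = C.inf' hC id ⊓ y) →
            u.countP (fun e => decide (e ∉ (↑(insert b C) : Set L))) ≤ m →
            x ≤ diam s (F a y u) := by
          intro m
          induction m with
          | zero =>
            intro u hu _ hcount
            have hall : ∀ e ∈ u, e ∈ (↑(insert b C) : Set L) := by
              intro e he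
              have h0 := List.countP_eq_zero.mp (Nat.le_zero.mp hcount) e he
              simp only [decide_eq_true_eq, not_not] at h0
              exact h0
            exact hx ⟨F a y u, ⟨u, hu, hall, rfl⟩, rfl⟩
          | succ m ihm =>
            intro u hu halpha hcount
            by_cases hall : ∀ e ∈ u, e ∈ (↑(insert b C) : Set L)
            · exact hx ⟨F a y u, ⟨u, hu, hall, rfl⟩, rfl⟩
            · obtain ⟨w, d, v, rfl, hd, hv⟩ := exists_last_bad hall
              have hdc : d = C.inf' hC id ⊓ y := by
                rcases halpha d (by simp) with h' | h'
                · exact absurd h' hd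
                · exact h'
              subst hdc
              have hcw : w.countP (fun e => decide (e ∉ (↑(insert b C) : Set L))) ≤ m := by
                have h2 : (fun e => decide (e ∉ (↑(insert b C) : Set L))) (C.inf' hC id ⊓ y)
                    = true := by simpa using hd
                have h3 := List.countP_cons_of_pos
                  (p := fun e => decide (e ∉ (↑(insert b C) : Set L))) (l := v) h2
                have h1 := hcount
                rw [List.countP_append, h3] at h1
                omega
              have halw : ∀ e ∈ w, e ∈ (↑(insert b C) : Set L) ∨ e = C.inf' hC id ⊓ y :=
                fun e he => halpha e (by simp [he])
              -- rewrite the seeded term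
              have hFv_le : F a y v ≤ y := F_le_seed hay v
              have hstep : F a y ((C.inf' hC id ⊓ y) :: v) = a ⊔ (C.inf' hC id ⊓ F a y v) := by
                rw [F_cons, inf_assoc, inf_eq_right.mpr hFv_le]
              have hgoal : F a y (w ++ (C.inf' hC id ⊓ y) :: v) =
                  F a (F a y ((C.inf' hC id ⊓ y) :: v)) w := F_append a y w _
              have haF : a ≤ F a y ((C.inf' hC id ⊓ y) :: v) := le_sup_left
              rw [hgoal, ← diam_comp a w s _ haF, hstep]
              refine ((IH k (Nat.lt_succ_self k) C hC hCcard a (comp a s w)).2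
                (F a y v) (le_F hay v)).2 ?_
              rintro z ⟨w', ⟨t', ht', ht'C, rfl⟩, rfl⟩
              show x ≤ diam (comp a s w) (F a (F a y v) t')
              rw [diam_comp a w _ _ (le_F (le_F hay v) t'), ← F_append a y t' v,
                ← F_append a y w (t' ++ v)]
              refine ihm (w ++ (t' ++ v)) (by simp [ht']) ?_ ?_
              · intro e he
                rcases List.mem_append.mp he with h' | h'
                · exact halw e h'
                · rcases List.mem_append.mp h' with h'' | h''
                  · exact Or.inl (by simp [Finset.mem_coe.mp (ht'C e h'')])
                  · exact Or.inl (hv e h'')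
              · rw [List.countP_append, List.countP_append]
                have hz1 : t'.countP (fun e => decide (e ∉ (↑(insert b C) : Set L))) = 0 := by
                  refine List.countP_eq_zero.mpr fun e he => ?_
                  simp only [decide_eq_true_eq, not_not]
                  exact Finset.mem_coe.mpr (Finset.mem_insert_of_mem (Finset.mem_coe.mp (ht'C e he)))
                have hz2 : v.countP (fun e => decide (e ∉ (↑(insert b C) : Set L))) = 0 := by
                  refine List.countP_eq_zero.mpr fun e he => ?_
                  simp only [decide_eq_true_eq, not_not]
                  exact hv e he
                omega
        refine (hSD s a b (C.inf' hC id ⊓ y)).2 ?_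
        rintro z ⟨w, ⟨u, hu, huBC, rfl⟩, rfl⟩
        refine le_trans (IC (u.countP (fun e => decide (e ∉ (↑(insert b C) : Set L)))) u hu ?_ le_rfl)
          (diam_mono s (F_le_dstar a y u hu))
        intro e he
        rcases Set.mem_insert_iff.mp (huBC e he) with rfl | h'
        · exact Or.inl (by simp)
        · exact Or.inr (Set.mem_singleton_iff.mp h')

end SDProof


/-- Every lattice satisfying `(SD^ω_∨)` is dually staircase distributive. -/
theorem duallyStaircase_of_sdOmega {L : Type*} [Lattice L] (h : SDomega L) :
    DuallyStaircaseDistributive L := by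
  intro a B hB
  have H := (SDProof.main h B.card B hB rfl a []).1
  simpa [SDProof.diam_nil, Set.image_id'] using H
end
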